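/- arXiv:0904.0874 — 7 statements merged into one kernel-verified Lean document; each statement's English description precedes it below -/
import Mathlib

section
/- Let n ∈ ℕ and let A : (a,b) → Matrix (Fin n) (Fin n) ℂ be a continuously differentiable matrix-valued function on an open interval (a,b) ⊂ ℝ. Then for every s ∈ (a,b), the derivative of s ↦ exp(A(s)) exists and equals d/ds exp(A(s)) = ∫_0^1 exp((1−t)·A(s)) · A′(s) · exp(t·A(s)) dt. -/
/-!
Differentiating `t ↦ exp ((1 - t) • X) * exp (t • Y)` gives Duhamel's formula
`exp Y - exp X = ∫₀¹ exp ((1 - t) • X) * (Y - X) * exp (t • Y) dt`. With `X = A s`, `Y = A u`, the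
difference quotient of `exp ∘ A` at `s` becomes a continuous function of `(slope A s u, A u)`, which
tends to `(A' s, A s)` as `u → s`.

The entrywise sup norm on matrices is not submultiplicative, so the Banach-algebra argument is run
with the `L∞` operator norm and transported back entrywise: derivatives, and the entries of an
integral, do not depend on the choice of norm.
-/

open NormedSpace Filter Topology

section BanachAlgebra

variable {𝔸 : Type*} [NormedRing 𝔸] [NormedAlgebra ℝ 𝔸] [CompleteSpace 𝔸]

@[fun_prop]
theorem NormedSpace.exp_continuous_of_real : Continuous (exp : 𝔸 → 𝔸) :=
  letI := NormedAlgebra.restrictScalars ℚ ℝ 𝔸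
  exp_continuous

theorem NormedSpace.exp_sub_exp_eq_intervalIntegral (X Y : 𝔸) :
    exp Y - exp X = ∫ t in (0:ℝ)..1, exp ((1 - t) • X) * (Y - X) * exp (t • Y) := by
  have hderiv (t : ℝ) : HasDerivAt (fun t : ℝ => exp ((1 - t) • X) * exp (t • Y))
      (exp ((1 - t) • X) * (Y - X) * exp (t • Y)) t := by
    have hX := (hasDerivAt_exp_smul_const X (1 - t)).scomp t ((hasDerivAt_id t).const_sub 1)
    refine (hX.mul (hasDerivAt_exp_smul_const' Y t)).congr_deriv ?_
    simp only [Function.comp_apply, neg_one_smul]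
    noncomm_ring
  rw [intervalIntegral.integral_eq_sub_of_hasDerivAt (fun t _ => hderiv t)
    (Continuous.intervalIntegrable (by fun_prop) 0 1)]
  simp

theorem HasDerivAt.normedSpace_exp {A : ℝ → 𝔸} {A' : 𝔸} {s : ℝ} (hA : HasDerivAt A A' s) :
    HasDerivAt (fun u => NormedSpace.exp (A u))
      (∫ t in (0:ℝ)..1, NormedSpace.exp ((1 - t) • A s) * A' * NormedSpace.exp (t • A s)) s := by
  set D : 𝔸 × 𝔸 → 𝔸 :=
    fun p => ∫ t in (0:ℝ)..1, NormedSpace.exp ((1 - t) • A s) * p.1 * NormedSpace.exp (t • p.2)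
  have hD : Continuous D :=
    intervalIntegral.continuous_parametric_intervalIntegral_of_continuous' (by fun_prop) 0 1
  have hslope (u : ℝ) : slope (fun u => NormedSpace.exp (A u)) s u = D (slope A s u, A u) := by
    simp only [D, slope_def_module, exp_sub_exp_eq_intervalIntegral (A s) (A u),
      ← intervalIntegral.integral_smul, ← smul_mul_assoc, mul_smul_comm]
  have hAs : Tendsto A (𝓝[≠] s) (𝓝 (A s)) := hA.continuousAt.continuousWithinAt.tendsto
  rw [hasDerivAt_iff_tendsto_slope] at hA ⊢
  exact ((hD.tendsto _).comp (hA.prodMk_nhds hAs)).congr fun u => (hslope u).symm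

end BanachAlgebra

attribute [local instance] Matrix.normedAddCommGroup Matrix.normedSpace

namespace Matrix

variable {m n 𝕜 : Type*} [RCLike 𝕜]

def entryCLM (R : Type*) {α : Type*} [Semiring R] [TopologicalSpace α] [AddCommMonoid α]
    [Module R α] (i : m) (j : n) : Matrix m n α →L[R] α :=
  (ContinuousLinearMap.proj (R := R) (φ := fun _ : n => α) j).comp (ContinuousLinearMap.proj i)

theorem intervalIntegral_apply [Fintype m] [Fintype n] {f : ℝ → Matrix m n 𝕜}
    (hf : Continuous f) (a b : ℝ) (i : m) (j : n) :
    (∫ t in a..b, f t) i j = ∫ t in a..b, f t i j :=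
  ((entryCLM ℝ i j).intervalIntegral_comp_comm (hf.intervalIntegrable a b)).symm

variable [Fintype m] [DecidableEq m]

@[fun_prop]
theorem continuous_exp : Continuous (exp : Matrix m m 𝕜 → Matrix m m 𝕜) :=
  open scoped Norms.Operator in exp_continuous_of_real

open scoped Norms.Operator in
theorem hasDerivAt_exp {A : ℝ → Matrix m m 𝕜} {A' : Matrix m m 𝕜} {s : ℝ}
    (hA : HasDerivAt A A' s) :
    HasDerivAt (fun u => exp (A u))
      (of fun i j => ∫ t in (0:ℝ)..1, (exp ((1 - t) • A s) * A' * exp (t • A s)) i j) s := by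
  refine hA.normedSpace_exp.congr_deriv ?_
  ext i j
  -- Stating the type makes the topology of `L` the operator-norm one, as the integral expects.
  let L : Matrix m m 𝕜 →L[ℝ] 𝕜 := entryCLM ℝ i j
  exact (L.intervalIntegral_comp_comm (Continuous.intervalIntegrable (by fun_prop) 0 1)).symm

end Matrix

theorem derivative_of_matrix_exponential_general (n : ℕ) (a b : ℝ)
    (A A' : ℝ → Matrix (Fin n) (Fin n) ℂ)
    (hA : ∀ s ∈ Set.Ioo a b, HasDerivAt A (A' s) s) :
    ∀ s ∈ Set.Ioo a b,
      HasDerivAt (fun s : ℝ => NormedSpace.exp (A s))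
        (∫ t in (0:ℝ)..1,
          NormedSpace.exp ((1 - t) • A s) * A' s * NormedSpace.exp (t • A s)) s := by
  intro s hs
  refine (Matrix.hasDerivAt_exp (hA s hs)).congr_deriv ?_
  ext i j
  exact (Matrix.intervalIntegral_apply (by fun_prop) 0 1 i j).symm

/-- For a `C¹` matrix-valued function `A` on an open interval `(a,b)`, the derivative of
`s ↦ exp(A s)` exists and equals `∫_0^1 exp((1−t)·A s) · A′ s · exp(t·A s) dt`. -/
theorem derivative_of_matrix_exponential (n : ℕ) (a b : ℝ)
    (A A' : ℝ → Matrix (Fin n) (Fin n) ℂ)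
    (hA : ∀ s ∈ Set.Ioo a b, HasDerivAt A (A' s) s)
    (hA' : ContinuousOn A' (Set.Ioo a b)) :
    ∀ s ∈ Set.Ioo a b,
      HasDerivAt (fun s : ℝ => NormedSpace.exp (A s))
        (∫ t in (0:ℝ)..1,
          NormedSpace.exp ((1 - t) • A s) * A' s * NormedSpace.exp (t • A s)) s :=
  derivative_of_matrix_exponential_general n a b A A' hA
end

section
/- Suppose the complex parameters (U_X)_{X ∈ Γ^4} satisfy |U_X| < log 2 / (16 β L^{4d}) for all X ∈ Γ^4. Then the infinite series defining P((U_X)) converges absolutely and |P((U_X)) − 1| < 1. -/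
open scoped Real BigOperators
open MeasureTheory

noncomputable section

/-- The dispersion relation `E_k`, with momentum `k = 2π m / L` parametrized by
`m : Fin d → ZMod L`. -/
def disp (d L : ℕ) (t t' μ : ℝ) (k : Fin d → ZMod L) : ℝ :=
  -2 * t * (∑ j : Fin d, Real.cos (2 * Real.pi * ((k j).val : ℝ) / L))
    - 4 * t' * (if 2 ≤ d then (1 : ℝ) else 0) *
        (∑ j : Fin d, ∑ l : Fin d,
          if j < l then
            Real.cos (2 * Real.pi * ((k j).val : ℝ) / L) *
              Real.cos (2 * Real.pi * ((k l).val : ℝ) / L)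
          else 0)
    - μ

/-- The inner product `⟨k, x⟩` of a momentum `k = 2π m / L` with a lattice site `x`. -/
def phase (d L : ℕ) (k x : Fin d → ZMod L) : ℝ :=
  ∑ j : Fin d, (2 * Real.pi * ((k j).val : ℝ) / L) * ((x j).val : ℝ)

/-- The covariance `C(xσs, yτu)`.  Spins are represented by `Bool` (`true` = ↑). -/
def Cov (d L : ℕ) [NeZero L] (t t' μ β : ℝ)
    (x : Fin d → ZMod L) (σ : Bool) (s : ℝ)
    (y : Fin d → ZMod L) (τ : Bool) (u : ℝ) : ℂ :=
  ((if σ = τ then (1 : ℂ) else 0) / (L : ℂ) ^ d) *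
    ∑ k : Fin d → ZMod L,
      Complex.exp (Complex.I * (phase d L k (y - x) : ℂ)) *
        (Real.exp (-((u - s) * disp d L t t' μ k)) : ℂ) *
        ((if u - s ≤ 0 then 1 / (1 + Real.exp (β * disp d L t t' μ k))
            else -(1 / (1 + Real.exp (-(β * disp d L t t' μ k)))) : ℝ) : ℂ)

/-- Quadruples of lattice sites (elements of `Γ⁴`). -/
abbrev Quad (d L : ℕ) :=
  (Fin d → ZMod L) × (Fin d → ZMod L) × (Fin d → ZMod L) × (Fin d → ZMod L)

/-- The pair index `j ∈ {1,…,n}` to which the row/column index `i ∈ {1,…,2n}` belongs. -/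
def halfIdx {n : ℕ} (i : Fin (2 * n)) : Fin n :=
  ⟨i.val / 2, by have := i.isLt; omega⟩

/-- The `x`-coordinate attached to the row index `i`: `x_{2j-1}` resp. `x_{2j}`. -/
def rowx {d L n : ℕ} (X : Fin n → Quad d L) (i : Fin (2 * n)) : Fin d → ZMod L :=
  if i.val % 2 = 0 then (X (halfIdx i)).1 else (X (halfIdx i)).2.1

/-- The `y`-coordinate attached to the column index `i`: `y_{2j-1}` resp. `y_{2j}`. -/
def rowy {d L n : ℕ} (X : Fin n → Quad d L) (i : Fin (2 * n)) : Fin d → ZMod L :=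
  if i.val % 2 = 0 then (X (halfIdx i)).2.2.1 else (X (halfIdx i)).2.2.2

/-- The spin `σ_i` : `↑` (`true`) for odd `i` (1-indexed), `↓` for even `i`. -/
def rowspin {n : ℕ} (i : Fin (2 * n)) : Bool := decide (i.val % 2 = 0)

/-- `det( C(x_j σ_j s_j, y_k σ_k s_k) )_{1 ≤ j,k ≤ 2n}` with the constraint
`s_{2j} = s_{2j-1}` built in (`sv` gives one time per pair). -/
def detTerm (d L : ℕ) [NeZero L] (t t' μ β : ℝ) (n : ℕ)
    (X : Fin n → Quad d L) (sv : Fin n → ℝ) : ℂ :=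
  Matrix.det (Matrix.of fun i j : Fin (2 * n) =>
    Cov d L t t' μ β (rowx X i) (rowspin i) (sv (halfIdx i))
      (rowy X j) (rowspin j) (sv (halfIdx j)))

/-- The `n`-th term of the (continuum) perturbation series, with general complex
weights `w : Γ⁴ → ℂ` in place of `U_{x,y,z,w}`. -/
def coefTerm (d L : ℕ) [NeZero L] (t t' μ β : ℝ) (n : ℕ) (w : Quad d L → ℂ) : ℂ :=
  (1 / n.factorial : ℂ) *
    ∑ X : Fin n → Quad d L,
      (∏ j : Fin n, -w (X j)) *
        ∫ sv in (Set.univ.pi fun _ : Fin n => Set.Icc (0 : ℝ) β),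
          detTerm d L t t' μ β n X sv

/-- The partition function series `P((U_X))`. -/
def Pseries (d L : ℕ) [NeZero L] (t t' μ β : ℝ) (U : Quad d L → ℂ) : ℂ :=
  1 + ∑' n : ℕ, coefTerm d L t t' μ β (n + 1) U

/-- The `n`-th term of the discretized perturbation series with time mesh `1/h`
and `M = βh` points in `[0,β)`. -/
def coefTermD (d L : ℕ) [NeZero L] (t t' μ β h : ℝ) (M : ℕ) (n : ℕ)
    (w : Quad d L → ℂ) : ℂ :=
  (1 / n.factorial : ℂ) *
    ∑ X : Fin n → Quad d L, ∑ sv : Fin n → Fin M,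
      (∏ j : Fin n, -(1 / (h : ℂ)) * w (X j)) *
        detTerm d L t t' μ β n X fun j => (sv j : ℝ) / h

/-- The discretized partition function `P_h((U_X))`. -/
def PseriesD (d L : ℕ) [NeZero L] (t t' μ β h : ℝ) (M : ℕ) (U : Quad d L → ℂ) : ℂ :=
  1 + ∑ n ∈ Finset.Icc 1 (L ^ d * M), coefTermD d L t t' μ β h M n U

/-- The interaction weight `δ_{x,y} δ_{z,w} δ_{x,z} + λ_{x,y,z,w} + λ_{z,w,x,y}`
appearing in `G_n(λ)`. -/
def lamCoef (d L : ℕ) (lam : Quad d L → ℝ) (q : Quad d L) : ℂ :=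
  (((if q.1 = q.2.1 ∧ q.2.2.1 = q.2.2.2 ∧ q.1 = q.2.2.1 then (1 : ℝ) else 0)
      + lam q + lam (q.2.2.1, q.2.2.2, q.1, q.2.1) : ℝ) : ℂ)

/-- `G_n(λ)` (continuum). -/
def Gcont (d L : ℕ) [NeZero L] (t t' μ β : ℝ) (n : ℕ) (lam : Quad d L → ℝ) : ℂ :=
  coefTerm d L t t' μ β n (lamCoef d L lam)

/-- `G_{h,n}(λ)` (discretized). -/
def Gdisc (d L : ℕ) [NeZero L] (t t' μ β h : ℝ) (M : ℕ) (n : ℕ)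
    (lam : Quad d L → ℝ) : ℂ :=
  coefTermD d L t t' μ β h M n (lamCoef d L lam)

/-- The logarithmic combination
`∑_{j=1}^{n+1} ((−1)^{j−1}/j) ∑_{m₁+⋯+m_j=n+1, m_k ≥ 1} ∏_k G_{m_k}(λ)`. -/
def logComb {α : Type*} (G : ℕ → α → ℂ) (n : ℕ) (lam : α) : ℂ :=
  ∑ j ∈ Finset.Icc 1 (n + 1), ((-1 : ℂ)) ^ (j - 1) / (j : ℂ) *
    ∑ m ∈ (Finset.Nat.antidiagonalTuple j (n + 1)).filter fun m => ∀ k, 1 ≤ m k,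
      ∏ k : Fin j, G (m k) lam

/-- The continuum perturbation coefficient `a_n`, as the derivative in the
direction of the parameter `λ_{X̃₁}` at `λ = 0`. -/
def aCont (d L : ℕ) [NeZero L] (t t' μ β : ℝ) (X1 : Quad d L) (n : ℕ) : ℂ :=
  -(1 / (β : ℂ)) *
    deriv (fun ε : ℝ =>
      logComb (Gcont d L t t' μ β) n fun q => if q = X1 then ε else 0) 0

/-- The discretized perturbation coefficient `a_{h,n}`. -/
def aDisc (d L : ℕ) [NeZero L] (t t' μ β h : ℝ) (M : ℕ) (X1 : Quad d L) (n : ℕ) : ℂ :=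
  -(1 / (β : ℂ)) *
    deriv (fun ε : ℝ =>
      logComb (Gdisc d L t t' μ β h M) n fun q => if q = X1 then ε else 0) 0

/-- The discretized `L¹`-norm `D_h` of the covariance, where `M = βh`. -/
def Dh (d L : ℕ) [NeZero L] (t t' μ β h : ℝ) (M : ℕ) : ℝ :=
  (1 / h) *
    ∑ x : Fin d → ZMod L, ∑ m : Fin (2 * M),
      ‖Cov d L t t' μ β x true (-β + (m : ℝ) / h) 0 true 0‖

/-- The decay constant `D = ∫_{−β}^{β} ds ∑_{x∈Γ} |C(x↑s, 0↑0)|`. -/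
def Dc (d L : ℕ) [NeZero L] (t t' μ β : ℝ) : ℝ :=
  ∫ s in (-β)..β,
    ∑ x : Fin d → ZMod L, ‖Cov d L t t' μ β x true s 0 true 0‖

end

/-!
Every entry of the covariance matrix has modulus at most `1` when all times lie in `[0, β]`,
since the Fermi factors `1/(1 + e^{±βE})` absorb the exponentials `e^{∓(u-s)E}`. Hadamard's
inequality then bounds the `2n × 2n` determinant by `(2n)^n`, so the `n`-th term of the series
is at most `(L^{4d} |U| β)^n (2n)^n / n! ≤ (2e L^{4d} |U| β)^n ≤ (e log 2 / 8)^n`. Since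
`r = e log 2 / 8 < 1/2`, the series is dominated by `∑_{n ≥ 1} r^n = r / (1 - r) < 1`.
-/

namespace Matrix

variable {𝕜 ι : Type*} [RCLike 𝕜] [Fintype ι] [DecidableEq ι]

theorem norm_det_le_prod_norm_rows (A : Matrix ι ι 𝕜) :
    ‖A.det‖ ≤ ∏ i, ‖WithLp.toLp 2 (A i)‖ := by
  -- Gram–Schmidt needs an ordered index type; any enumeration of `ι` will do.
  let _ : LinearOrder ι := LinearOrder.lift' _ (Fintype.equivFin ι).injective
  let _ : LocallyFiniteOrderBot ι := .ofIic ι (fun a => {x | x ≤ a}) (by simp)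
  let rows : ι → EuclideanSpace 𝕜 ι := fun i => WithLp.toLp 2 (A i)
  let e := (EuclideanSpace.basisFun ι 𝕜).toBasis
  let b := InnerProductSpace.gramSchmidtOrthonormalBasis (finrank_euclideanSpace (𝕜 := 𝕜)) rows
  -- `b.toBasis.toMatrix rows` is triangular with diagonal `⟪b i, rows i⟫`.
  have hdet : A.det = e.det b * b.toBasis.det rows := by
    rw [← b.coe_toBasis, Module.Basis.det_apply, Module.Basis.det_apply, ← det_mul,
      Module.Basis.toMatrix_mul_toMatrix, ← det_transpose]
    rfl
  rw [hdet, norm_mul, OrthonormalBasis.det_to_matrix_orthonormalBasis, one_mul,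
    InnerProductSpace.gramSchmidtOrthonormalBasis_det, norm_prod]
  gcongr with i
  exact (norm_inner_le_norm _ _).trans_eq (by rw [b.orthonormal.1 i, one_mul])

theorem norm_det_le_of_norm_le (A : Matrix ι ι 𝕜) {c : ℝ} (hA : ∀ i j, ‖A i j‖ ≤ c) :
    ‖A.det‖ ≤ (√(Fintype.card ι) * c) ^ Fintype.card ι := by
  refine A.norm_det_le_prod_norm_rows.trans ?_
  rw [← Finset.card_univ, ← Finset.prod_const]
  gcongr with i
  have hc : 0 ≤ c := (norm_nonneg _).trans (hA i i)
  rw [EuclideanSpace.norm_eq, ← Real.sqrt_sq hc, ← Real.sqrt_mul (Nat.cast_nonneg _)]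
  gcongr
  simpa using Finset.sum_le_sum fun j (_ : j ∈ Finset.univ) =>
    pow_le_pow_left₀ (norm_nonneg _) (hA i j) 2

end Matrix

theorem Real.exp_mul_le_one_add_exp {a β : ℝ} (E : ℝ) (ha : 0 ≤ a) (haβ : a ≤ β) :
    Real.exp (a * E) ≤ 1 + Real.exp (β * E) := by
  rcases le_total E 0 with hE | hE
  · linarith [Real.exp_le_one_iff.mpr (mul_nonpos_of_nonneg_of_nonpos ha hE), Real.exp_pos (β * E)]
  · linarith [Real.exp_le_exp.mpr (mul_le_mul_of_nonneg_right haβ hE)]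

theorem abs_fermi_propagator_le_one {β s u : ℝ} (E : ℝ) (hs : s ∈ Set.Icc 0 β)
    (hu : u ∈ Set.Icc 0 β) :
    Real.exp (-((u - s) * E)) *
      |if u - s ≤ 0 then 1 / (1 + Real.exp (β * E))
        else -(1 / (1 + Real.exp (-(β * E))))| ≤ 1 := by
  obtain ⟨hs0, hsβ⟩ := hs
  obtain ⟨hu0, huβ⟩ := hu
  split_ifs with h
  · rw [abs_of_nonneg (by positivity), mul_one_div, div_le_one (by positivity),
      show -((u - s) * E) = (s - u) * E by ring]
    exact Real.exp_mul_le_one_add_exp E (by linarith) (by linarith)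
  · rw [abs_neg, abs_of_nonneg (by positivity), mul_one_div, div_le_one (by positivity),
      show -((u - s) * E) = (u - s) * -E by ring, show -(β * E) = β * -E by ring]
    exact Real.exp_mul_le_one_add_exp (-E) (by linarith) (by linarith)

theorem Real.two_mul_pow_div_factorial_le (n : ℕ) :
    (2 * n : ℝ) ^ n / n.factorial ≤ (2 * Real.exp 1) ^ n := by
  rw [mul_pow, mul_pow, mul_div_assoc, Real.exp_one_pow]
  gcongr
  exact Real.pow_div_factorial_le_exp _ (Nat.cast_nonneg n) n

theorem summable_norm_and_norm_tsum_lt_one {E : Type*} [NormedAddCommGroup E] [CompleteSpace E]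
    {a : ℕ → E} {r : ℝ} (hr : r < 1 / 2) (ha : ∀ n, ‖a n‖ ≤ r ^ (n + 1)) :
    (Summable fun n => ‖a n‖) ∧ ‖∑' n, a n‖ < 1 := by
  have hr0 : 0 ≤ r := by simpa using (norm_nonneg _).trans (ha 0)
  have hgeom : HasSum (fun n => r ^ (n + 1)) (r / (1 - r)) := by
    simpa [pow_succ', div_eq_mul_inv] using
      (hasSum_geometric_of_lt_one hr0 (by linarith)).mul_left r
  have hsum : Summable fun n => ‖a n‖ := hgeom.summable.of_nonneg_of_le (fun _ => norm_nonneg _) ha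
  refine ⟨hsum, ?_⟩
  calc ‖∑' n, a n‖ ≤ ∑' n, ‖a n‖ := norm_tsum_le_tsum_norm hsum
    _ ≤ r / (1 - r) := hasSum_le ha hsum.hasSum hgeom
    _ < 1 := by rw [div_lt_one (by linarith)]; linarith

section Covariance

variable {d L : ℕ} [NeZero L] {t t' μ β : ℝ}

theorem card_site : Fintype.card (Fin d → ZMod L) = L ^ d := by
  simp [ZMod.card]

theorem card_quad : Fintype.card (Quad d L) = L ^ (4 * d) := by
  simp only [Quad, Fintype.card_prod, card_site]
  ring

theorem norm_Cov_le_one (x : Fin d → ZMod L) (σ : Bool) {s : ℝ} (y : Fin d → ZMod L) (τ : Bool)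
    {u : ℝ} (hs : s ∈ Set.Icc 0 β) (hu : u ∈ Set.Icc 0 β) :
    ‖Cov d L t t' μ β x σ s y τ u‖ ≤ 1 := by
  have hL : (0 : ℝ) < (L : ℝ) ^ d := by have := NeZero.pos L; positivity
  have hδ : ‖(if σ = τ then (1 : ℂ) else 0) / (L : ℂ) ^ d‖ ≤ 1 / (L : ℝ) ^ d := by
    rw [norm_div, norm_pow, Complex.norm_natCast]
    gcongr
    split_ifs <;> simp
  rw [Cov, norm_mul]
  refine (mul_le_mul hδ (norm_sum_le_of_le (n := fun _ => 1) _ fun k _ => ?_) (norm_nonneg _)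
    (by positivity)).trans_eq ?_
  · rw [norm_mul, norm_mul, Complex.norm_exp_I_mul_ofReal, one_mul, Complex.norm_real,
      Complex.norm_real, Real.norm_eq_abs, Real.norm_eq_abs, abs_of_pos (Real.exp_pos _)]
    exact abs_fermi_propagator_le_one _ hs hu
  · simp only [Finset.sum_const, Finset.card_univ, card_site, nsmul_eq_mul, mul_one]
    push_cast
    field_simp

theorem norm_detTerm_le {n : ℕ} (X : Fin n → Quad d L) {sv : Fin n → ℝ}
    (hsv : ∀ j, sv j ∈ Set.Icc 0 β) :
    ‖detTerm d L t t' μ β n X sv‖ ≤ (2 * n : ℝ) ^ n := by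
  refine (Matrix.norm_det_le_of_norm_le _ fun i j =>
    norm_Cov_le_one _ _ _ _ (hsv _) (hsv _)).trans_eq ?_
  rw [Fintype.card_fin, mul_one, pow_mul, Real.sq_sqrt (by positivity)]
  push_cast; rfl

theorem norm_integral_detTerm_le (hβ : 0 ≤ β) {n : ℕ} (X : Fin n → Quad d L) :
    ‖∫ sv in (Set.univ.pi fun _ : Fin n => Set.Icc (0 : ℝ) β), detTerm d L t t' μ β n X sv‖ ≤
      (2 * n : ℝ) ^ n * β ^ n := by
  have hvol : volume (Set.univ.pi fun _ : Fin n => Set.Icc (0 : ℝ) β) = ENNReal.ofReal β ^ n := by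
    rw [volume_pi_pi]
    simp [Real.volume_Icc]
  refine (norm_setIntegral_le_of_norm_le_const (hvol ▸ ENNReal.pow_lt_top ENNReal.ofReal_lt_top)
    fun sv hsv => norm_detTerm_le X (Set.mem_univ_pi.mp hsv)).trans_eq ?_
  rw [Measure.real, hvol, ENNReal.toReal_pow, ENNReal.toReal_ofReal hβ]

theorem norm_coefTerm_le (hβ : 0 ≤ β) {w : Quad d L → ℂ} {u : ℝ} (hw : ∀ X, ‖w X‖ ≤ u) (n : ℕ) :
    ‖coefTerm d L t t' μ β n w‖ ≤ (2 * Real.exp 1 * (L ^ (4 * d) * u * β)) ^ n := by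
  have hu : 0 ≤ u := (norm_nonneg _).trans (hw 0)
  have hterm : ∀ X : Fin n → Quad d L, ‖(∏ j, -w (X j)) *
      ∫ sv in (Set.univ.pi fun _ : Fin n => Set.Icc (0 : ℝ) β), detTerm d L t t' μ β n X sv‖ ≤
        u ^ n * ((2 * n : ℝ) ^ n * β ^ n) := fun X => by
    rw [norm_mul, norm_prod]
    gcongr
    · simpa using Finset.prod_le_prod (s := Finset.univ) (fun j _ => norm_nonneg _)
        fun j _ => hw (X j)
    · exact norm_integral_detTerm_le hβ X
  have hsum : ‖∑ X : Fin n → Quad d L, (∏ j, -w (X j)) *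
      ∫ sv in (Set.univ.pi fun _ : Fin n => Set.Icc (0 : ℝ) β), detTerm d L t t' μ β n X sv‖ ≤
        (L ^ (4 * d) * u * β) ^ n * (2 * n) ^ n := by
    refine (norm_sum_le_of_le _ fun X _ => hterm X).trans_eq ?_
    simp only [Finset.sum_const, Finset.card_univ, Fintype.card_fun, card_quad, Fintype.card_fin,
      nsmul_eq_mul]
    push_cast
    ring
  calc ‖coefTerm d L t t' μ β n w‖
      ≤ (L ^ (4 * d) * u * β) ^ n * ((2 * n : ℝ) ^ n / n.factorial) := by
        rw [coefTerm, norm_mul, norm_div, norm_one, Complex.norm_natCast, one_div_mul_eq_div,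
          mul_div_assoc']
        gcongr
    _ ≤ (L ^ (4 * d) * u * β) ^ n * (2 * Real.exp 1) ^ n := by
        gcongr
        exact Real.two_mul_pow_div_factorial_le n
    _ = (2 * Real.exp 1 * (L ^ (4 * d) * u * β)) ^ n := by ring

end Covariance

/-- If `|U_X| < log 2/(16 β L^{4d})` for all `X ∈ Γ⁴`, then the series defining
`P((U_X))` converges absolutely and `|P((U_X)) − 1| < 1`. -/
theorem partition_series_bound (d L : ℕ) [NeZero L] (t t' μ β : ℝ) (hβ : 0 < β)
    (U : Quad d L → ℂ)
    (hU : ∀ X : Quad d L,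
      ‖U X‖ < Real.log 2 / (16 * β * (L : ℝ) ^ (4 * d))) :
    (Summable fun n : ℕ => ‖coefTerm d L t t' μ β (n + 1) U‖) ∧
      ‖Pseries d L t t' μ β U - 1‖ < 1 := by
  have hL : (0 : ℝ) < (L : ℝ) ^ (4 * d) := by have := NeZero.pos L; positivity
  have hratio : 2 * Real.exp 1 *
      ((L : ℝ) ^ (4 * d) * (Real.log 2 / (16 * β * (L : ℝ) ^ (4 * d))) * β) =
        Real.exp 1 * Real.log 2 / 8 := by
    field_simp
    ring
  have hr : Real.exp 1 * Real.log 2 / 8 < 1 / 2 := by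
    nlinarith [Real.exp_one_lt_d9, Real.log_two_lt_d9, Real.log_pos one_lt_two]
  have hcoef : ∀ n, ‖coefTerm d L t t' μ β (n + 1) U‖ ≤ (Real.exp 1 * Real.log 2 / 8) ^ (n + 1) :=
    fun n => hratio ▸ norm_coefTerm_le hβ.le (fun X => (hU X).le) (n + 1)
  simpa [Pseries] using summable_norm_and_norm_tsum_lt_one hr hcoef
end

section
/- The power series f(x) := ∑_{n=0}^∞ (4/(3n+4)) · binom(3n+4, n) · x^n has radius of convergence 4/27; moreover f converges at x = 4/27 and f(4/27) = 81/16. -/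
/-!
`(2/3)ʳ raney r n (4/27)ⁿ` is the probability that the walk with steps `+2` (probability `1/3`)
and `-1` (probability `2/3`) started at `r` first reaches `0` at time `3n + r`. This walk has
zero drift, so it reaches `0` almost surely: `∑ₙ raney r n (4/27)ⁿ = (3/2)ʳ`, and `f(4/27)` is the
case `r = 4`. Analytically, the recurrence `raney (r+1) (n+1) = raney r (n+1) + raney (r+3) n`
shows that `u r = (2/3)ʳ ∑ₙ raney r n (4/27)ⁿ` solves `u (r+1) = 2/3 u r + 1/3 u (r+3)`, with
`u 0 = 1` and `0 ≤ u ≤ 1` by bounding partial sums; bounded solutions of this recurrence are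
constant. Convergence for `|x| ≤ 4/27` follows by comparison, and divergence beyond `4/27` by
the ratio test, the ratio of consecutive Raney numbers tending to `27/4`.
-/

open Filter Topology Finset

lemma eq_zero_of_abs_le_of_succ_eq_mul {v : ℕ → ℝ} {c C : ℝ} (hc : 1 < |c|)
    (hv : ∀ m, v (m + 1) = c * v m) (hC : ∀ m, |v m| ≤ C) (m : ℕ) : v m = 0 := by
  have hpow : ∀ m, v m = c ^ m * v 0 := by
    intro m
    induction m with
    | zero => simp
    | succ m ih => rw [hv, ih]; ring
  suffices h0 : v 0 = 0 by rw [hpow, h0, mul_zero]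
  by_contra h0
  obtain ⟨k, hk⟩ := pow_unbounded_of_one_lt (C / |v 0|) hc
  have hk' : |c| ^ k ≤ C / |v 0| := by
    rw [le_div_iff₀ (abs_pos.2 h0), ← abs_pow, ← abs_mul, ← hpow]
    exact hC k
  exact hk.not_ge hk'

lemma eq_zero_of_abs_le_of_succ_sub_eq {u : ℕ → ℝ} {d C : ℝ} (hu : ∀ m, u (m + 1) - u m = d)
    (hC : ∀ m, |u m| ≤ C) : d = 0 := by
  have hlin : ∀ m : ℕ, u m - u 0 = m * d := by
    intro m
    induction m with
    | zero => simp
    | succ m ih => push_cast; linarith [hu m]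
  by_contra hd
  obtain ⟨m, hm⟩ := exists_nat_gt (2 * C / |d|)
  have hle : m * |d| ≤ 2 * C := by
    calc m * |d| = |u m - u 0| := by rw [hlin, abs_mul, Nat.abs_cast]
      _ ≤ |u m| + |u 0| := abs_sub _ _
      _ ≤ 2 * C := by linarith [hC m, hC 0]
  rw [div_lt_iff₀ (abs_pos.2 hd)] at hm
  linarith

/-- The characteristic polynomial is `t³ - 3t + 2 = (t - 1)² (t + 2)`: boundedness kills the
`(-2)ᵐ` component of the second difference and then the linear component of the first. -/
lemma eq_of_abs_le_of_add_three_eq {u : ℕ → ℝ} {C : ℝ}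
    (hu : ∀ m, u (m + 3) = 3 * u (m + 1) - 2 * u m) (hC : ∀ m, |u m| ≤ C) (m : ℕ) :
    u m = u 0 := by
  have hsecond : ∀ m, u (m + 2) - 2 * u (m + 1) + u m = 0 := by
    refine eq_zero_of_abs_le_of_succ_eq_mul (c := -2) (C := 4 * C) (by norm_num)
      (fun m => by linarith [hu m]) (fun m => ?_)
    have h0 := abs_le.1 (hC m)
    have h1 := abs_le.1 (hC (m + 1))
    have h2 := abs_le.1 (hC (m + 2))
    rw [abs_le]
    constructor <;> linarith
  have hfirst : ∀ m, u (m + 1) - u m = u 1 - u 0 := by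
    intro m
    induction m with
    | zero => rfl
    | succ m ih => linarith [hsecond m]
  have hstep := eq_zero_of_abs_le_of_succ_sub_eq hfirst hC
  induction m with
  | zero => rfl
  | succ m ih => linarith [hfirst m]

/-- The Raney numbers `r/(3n+r)·binom(3n+r, n)`, the coefficients of `B(x)ʳ` where
`B = 1 + x B³`; the case `n = 0` is split off so that `raney 0 0 = 1` rather than `0/0 = 0`. -/
noncomputable def raney (r n : ℕ) : ℝ :=
  if n = 0 then 1 else r / (3 * n + r) * (3 * n + r).choose n

@[simp] lemma raney_zero_right (r : ℕ) : raney r 0 = 1 := if_pos rfl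

@[simp] lemma raney_zero_succ (n : ℕ) : raney 0 (n + 1) = 0 := by simp [raney]

lemma raney_of_pos {r : ℕ} (hr : 0 < r) (n : ℕ) :
    raney r n = r / (3 * n + r) * (3 * n + r).choose n := by
  rcases n.eq_zero_or_pos with rfl | hn
  · have : (r : ℝ) ≠ 0 := by positivity
    simp [this]
  · exact if_neg hn.ne'

lemma raney_nonneg (r n : ℕ) : 0 ≤ raney r n := by
  unfold raney; split_ifs <;> positivity

lemma raney_pos {r : ℕ} (hr : 0 < r) (n : ℕ) : 0 < raney r n := by
  have := Nat.choose_pos (show n ≤ 3 * n + r by omega)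
  rw [raney_of_pos hr]
  positivity

lemma raney_succ (r n : ℕ) :
    raney r (n + 1) = r / (3 * (n + 1 : ℕ) + r) * (3 * (n + 1) + r).choose (n + 1) :=
  if_neg n.succ_ne_zero

lemma raney_succ_succ (r n : ℕ) : raney (r + 1) (n + 1) = raney r (n + 1) + raney (r + 3) n := by
  have hpascal : (3 * (n + 1) + (r + 1)).choose (n + 1)
      = (3 * n + r + 3).choose n + (3 * n + r + 3).choose (n + 1) := by
    rw [show 3 * (n + 1) + (r + 1) = (3 * n + r + 3) + 1 by omega]
    exact Nat.choose_succ_succ _ _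
  have habsorb : ((3 * n + r + 3).choose (n + 1) : ℝ) * ((n : ℝ) + 1)
      = ((3 * n + r + 3).choose n : ℝ) * (2 * (n : ℝ) + r + 3) := by
    have h := Nat.choose_succ_right_eq (3 * n + r + 3) n
    rw [show 3 * n + r + 3 - n = 2 * n + r + 3 by omega] at h
    exact_mod_cast h
  rw [raney_succ, raney_succ, raney_of_pos (r := r + 3) (by omega),
    show 3 * (n + 1) + r = 3 * n + r + 3 by omega,
    show 3 * n + (r + 3) = 3 * n + r + 3 by omega, hpascal]
  push_cast
  field_simp
  linear_combination (3 * (3 * (n : ℝ) + r + 3)) * habsorb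

lemma raney_succ_mul {r : ℕ} (hr : 0 < r) (n : ℕ) :
    raney r (n + 1) * ((n + 1) * (2 * n + r + 1) * (2 * n + r + 2))
      = raney r n * ((3 * n + r) * (3 * n + r + 1) * (3 * n + r + 2)) := by
  have h1 := Nat.choose_mul_succ_eq (3 * n + r) n
  have h2 := Nat.choose_mul_succ_eq (3 * n + r + 1) n
  have h3 := Nat.add_one_mul_choose_eq (3 * n + r + 2) n
  rw [show 3 * n + r + 1 - n = 2 * n + r + 1 by omega] at h1
  rw [show 3 * n + r + 1 + 1 - n = 2 * n + r + 2 by omega] at h2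
  have h1' : ((3 * n + r).choose n : ℝ) * (3 * n + r + 1)
      = ((3 * n + r + 1).choose n : ℝ) * (2 * n + r + 1) := by exact_mod_cast h1
  have h2' : ((3 * n + r + 1).choose n : ℝ) * (3 * n + r + 2)
      = ((3 * n + r + 2).choose n : ℝ) * (2 * n + r + 2) := by exact_mod_cast h2
  have h3' : (3 * n + r + 3 : ℝ) * ((3 * n + r + 2).choose n : ℝ)
      = ((3 * n + r + 3).choose (n + 1) : ℝ) * (n + 1) := by exact_mod_cast h3
  have key : ((3 * n + r + 3).choose (n + 1) : ℝ) * ((n + 1) * (2 * n + r + 1) * (2 * n + r + 2))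
      = ((3 * n + r).choose n : ℝ) * ((3 * n + r + 1) * (3 * n + r + 2) * (3 * n + r + 3)) := by
    linear_combination (-(2 * (n : ℝ) + r + 1) * (2 * n + r + 2)) * h3'
      - (3 * (n : ℝ) + r + 3) * (2 * n + r + 1) * h2'
      - (3 * (n : ℝ) + r + 2) * (3 * n + r + 3) * h1'
  rw [raney_succ, raney_of_pos hr, show 3 * (n + 1) + r = 3 * n + r + 3 by omega]
  push_cast
  field_simp
  linear_combination key

lemma sum_range_succ_raney_succ (r N : ℕ) :
    ∑ n ∈ range (N + 1), raney (r + 1) n * (4 / 27 : ℝ) ^ n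
      = ∑ n ∈ range (N + 1), raney r n * (4 / 27 : ℝ) ^ n
        + 4 / 27 * ∑ n ∈ range N, raney (r + 3) n * (4 / 27 : ℝ) ^ n := by
  have hshift (n : ℕ) : raney (r + 3) n * (4 / 27 : ℝ) ^ (n + 1)
      = 4 / 27 * (raney (r + 3) n * (4 / 27 : ℝ) ^ n) := by ring
  simp only [sum_range_succ' _ N, raney_succ_succ, raney_zero_right, add_mul, sum_add_distrib,
    hshift, ← mul_sum]
  ring

lemma sum_range_raney_mul_pow_le (N r : ℕ) :
    ∑ n ∈ range N, raney r n * (4 / 27 : ℝ) ^ n ≤ (3 / 2) ^ r := by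
  induction N generalizing r with
  | zero => simp only [range_zero, sum_empty]; positivity
  | succ N ihN =>
    induction r with
    | zero => simp [sum_range_succ']
    | succ r ihr =>
      rw [sum_range_succ_raney_succ]
      calc _ ≤ (3 / 2 : ℝ) ^ r + 4 / 27 * (3 / 2) ^ (r + 3) := by gcongr; exact ihN _
        _ = (3 / 2) ^ (r + 1) := by ring

lemma summable_raney_mul_pow_four_div (r : ℕ) :
    Summable fun n => raney r n * (4 / 27 : ℝ) ^ n :=
  summable_of_sum_range_le (fun n => mul_nonneg (raney_nonneg r n) (by positivity))
    (sum_range_raney_mul_pow_le · r)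

lemma tsum_raney_succ_mul_pow (r : ℕ) :
    ∑' n, raney (r + 1) n * (4 / 27 : ℝ) ^ n
      = ∑' n, raney r n * (4 / 27 : ℝ) ^ n
        + 4 / 27 * ∑' n, raney (r + 3) n * (4 / 27 : ℝ) ^ n := by
  have hlim (r : ℕ) := (summable_raney_mul_pow_four_div r).hasSum.tendsto_sum_nat
  refine tendsto_nhds_unique ((hlim (r + 1)).comp (tendsto_add_atTop_nat 1)) ?_
  simp only [Function.comp_def, sum_range_succ_raney_succ]
  exact ((hlim r).comp (tendsto_add_atTop_nat 1)).add ((hlim (r + 3)).const_mul _)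

lemma tsum_raney_mul_pow (r : ℕ) : ∑' n, raney r n * (4 / 27 : ℝ) ^ n = (3 / 2) ^ r := by
  set h : ℕ → ℝ := fun r => (2 / 3) ^ r * ∑' n, raney r n * (4 / 27 : ℝ) ^ n with hh
  have hrec (m : ℕ) : h (m + 3) = 3 * h (m + 1) - 2 * h m := by
    simp only [hh, tsum_raney_succ_mul_pow m]
    ring
  have hbound (m : ℕ) : |h m| ≤ 1 := by
    have hnonneg : 0 ≤ h m := mul_nonneg (by positivity)
      (tsum_nonneg fun n => mul_nonneg (raney_nonneg m n) (by positivity))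
    refine abs_le.2 ⟨by linarith, ?_⟩
    calc h m ≤ (2 / 3) ^ m * (3 / 2) ^ m := mul_le_mul_of_nonneg_left
          ((summable_raney_mul_pow_four_div m).tsum_le_of_sum_range_le
            (sum_range_raney_mul_pow_le · m)) (by positivity)
      _ = 1 := by rw [← mul_pow]; norm_num
  have h0 : h 0 = 1 := by
    simp only [hh, pow_zero, one_mul]
    rw [tsum_eq_single 0 fun n hn => ?_]
    · simp
    · obtain ⟨k, rfl⟩ := Nat.exists_eq_succ_of_ne_zero hn
      simp
  have hr : (2 / 3 : ℝ) ^ r * ∑' n, raney r n * (4 / 27 : ℝ) ^ n = 1 :=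
    (eq_of_abs_le_of_add_three_eq hrec hbound r).trans h0
  calc _ = (3 / 2 : ℝ) ^ r * ((2 / 3) ^ r * ∑' n, raney r n * (4 / 27 : ℝ) ^ n) := by
        rw [← mul_assoc, ← mul_pow]; norm_num
    _ = (3 / 2) ^ r := by rw [hr, mul_one]

lemma summable_raney_mul_pow (r : ℕ) {x : ℝ} (hx : |x| ≤ 4 / 27) :
    Summable fun n => raney r n * x ^ n :=
  (summable_raney_mul_pow_four_div r).of_norm_bounded fun n => by
    rw [norm_mul, norm_pow, Real.norm_of_nonneg (raney_nonneg r n), Real.norm_eq_abs]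
    gcongr
    exact raney_nonneg r n

lemma tendsto_raney_succ_div {r : ℕ} (hr : 0 < r) :
    Tendsto (fun n => raney r (n + 1) / raney r n) atTop (𝓝 (27 / 4)) := by
  have hfactors : Tendsto (fun n : ℕ => ((r : ℝ) + 3 * n) / (1 + 1 * n)
      * ((r + 1 + 3 * n) / (r + 1 + 2 * n)) * ((r + 2 + 3 * n) / (r + 2 + 2 * n)))
      atTop (𝓝 (3 / 1 * (3 / 2) * (3 / 2))) :=
    ((tendsto_add_mul_div_add_mul_atTop_nhds _ _ _ one_ne_zero).mul
      (tendsto_add_mul_div_add_mul_atTop_nhds _ _ _ two_ne_zero)).mul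
      (tendsto_add_mul_div_add_mul_atTop_nhds _ _ _ two_ne_zero)
  norm_num at hfactors
  refine hfactors.congr fun n => ?_
  have hpos := raney_pos hr n
  rw [eq_div_iff hpos.ne']
  field_simp
  linear_combination -raney_succ_mul hr n

lemma not_summable_raney_mul_pow {r : ℕ} (hr : 0 < r) {x : ℝ} (hx : 4 / 27 < |x|) :
    ¬ Summable fun n => raney r n * x ^ n := by
  have hx0 : x ≠ 0 := abs_pos.1 (by linarith)
  refine not_summable_of_ratio_test_tendsto_gt_one (l := 27 / 4 * |x|) (by linarith) ?_
  refine ((tendsto_raney_succ_div hr).mul_const |x|).congr fun n => ?_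
  rw [norm_mul, norm_mul, norm_pow, norm_pow, Real.norm_of_nonneg (raney_nonneg r n),
    Real.norm_of_nonneg (raney_nonneg r _), Real.norm_eq_abs, pow_succ]
  have := pow_pos (abs_pos.2 hx0) n
  field_simp

/-- The power series `f(x) = ∑ (4/(3n+4))·binom(3n+4,n)·xⁿ` has radius of convergence
`4/27`; it converges at `x = 4/27` with sum `81/16`. -/
theorem radius_and_value_of_dominant_series :
    (∀ x : ℝ, |x| < 4 / 27 →
      Summable fun n : ℕ => 4 / (3 * (n : ℝ) + 4) * (Nat.choose (3 * n + 4) n : ℝ) * x ^ n) ∧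
    (∀ x : ℝ, 4 / 27 < |x| →
      ¬ Summable fun n : ℕ => 4 / (3 * (n : ℝ) + 4) * (Nat.choose (3 * n + 4) n : ℝ) * x ^ n) ∧
    (Summable fun n : ℕ =>
      4 / (3 * (n : ℝ) + 4) * (Nat.choose (3 * n + 4) n : ℝ) * (4 / 27 : ℝ) ^ n) ∧
    ∑' n : ℕ, 4 / (3 * (n : ℝ) + 4) * (Nat.choose (3 * n + 4) n : ℝ) * (4 / 27 : ℝ) ^ n
      = 81 / 16 := by
  have hcoeff (n : ℕ) : 4 / (3 * (n : ℝ) + 4) * (Nat.choose (3 * n + 4) n : ℝ) = raney 4 n := by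
    rw [raney_of_pos four_pos]; norm_num
  simp only [hcoeff]
  refine ⟨fun x hx => summable_raney_mul_pow 4 hx.le,
    fun x hx => not_summable_raney_mul_pow four_pos hx, summable_raney_mul_pow_four_div 4, ?_⟩
  rw [tsum_raney_mul_pow]
  norm_num
end

section
/- For every L ∈ ℕ and β > 0, ∑_{x ∈ (ℤ/Lℤ)²} 1 / ( 1 + ∑_{l=1}^2 |e^{i·2π·x_l/L} − 1|³ · L³ / (8π³β³) ) ≤ 4 + 8π²β/(3√3) + 4π³β²/(3√3), where x = (x₁, x₂) and each x_l is any integer representative of its class mod L. -/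
/-!
With `c = π β` and `m(v) = |v.valMinAbs|` the distance of `v` to `0` in `ZMod L`, Jordan's
inequality `|sin y| ≥ 2|y|/π` gives `|e^{2πiv/L} - 1| ≥ 4 m(v)/L`, so each summand is at most
`w(max(m(x₁), m(x₂)))` with `w(t) = 1/(1 + (2t/c)³)`. Through `valMinAbs`, `(ZMod L)²` embeds in
the box `[-L/2, L/2]²` of `ℤ²`, whose sup-norm sphere of radius `M ≥ 1` has `8M` points. The sum
is thus at most `1 + ∑_{M ≥ 1} 8 M w(M)`, and since `8M w(M) ≤ 8(t + 1) w(t)` for `t ∈ [M-1, M]`,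
its partial sums are bounded by `∫₀^K 8(t + 1) w(t) dt`, computed by partial fractions: the
arctangent part gives `4πc(c + 2)/(3√3)` and the logarithmic part stays below `1`.
-/

open Real Finset

lemma norm_exp_I_mul_sub_one_ge {x : ℝ} (hx : |x| ≤ π) :
    2 / π * |x| ≤ ‖Complex.exp (Complex.I * x) - 1‖ := by
  have hx2 : |x / 2| ≤ π / 2 := by rw [abs_div, abs_two]; linarith
  rw [Complex.norm_exp_I_mul_ofReal_sub_one, norm_mul, Real.norm_two, Real.norm_eq_abs]
  have := Real.mul_abs_le_abs_sin hx2
  rw [abs_div, abs_two] at this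
  linarith

lemma exp_I_mul_two_pi_val_div (L : ℕ) [NeZero L] (v : ZMod L) :
    Complex.exp (Complex.I * (2 * π * (v.val : ℝ) / L)) =
      Complex.exp (Complex.I * (2 * π * (v.valMinAbs : ℝ) / L)) := by
  have hL : (L : ℂ) ≠ 0 := Nat.cast_ne_zero.2 (NeZero.ne L)
  have hv := congrArg (fun n : ℤ => (n : ℂ)) (ZMod.val_eq_ite_valMinAbs v)
  split_ifs at hv <;> push_cast at hv ⊢ <;> rw [hv]
  · simp
  · rw [show Complex.I * (2 * π * (v.valMinAbs + L) / L) =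
        Complex.I * (2 * π * v.valMinAbs / L) + 2 * π * Complex.I by field_simp,
      Complex.exp_add, Complex.exp_two_pi_mul_I, mul_one]

lemma four_mul_natAbs_valMinAbs_div_le (L : ℕ) [NeZero L] (v : ZMod L) :
    4 * (v.valMinAbs.natAbs : ℝ) / L ≤
      ‖Complex.exp (Complex.I * (2 * π * (v.val : ℝ) / L)) - 1‖ := by
  have hL : (0 : ℝ) < L := Nat.cast_pos.2 (Nat.pos_of_neZero L)
  have hv : 2 * (v.valMinAbs.natAbs : ℝ) ≤ L := by
    exact_mod_cast (Nat.mul_le_mul_left 2 (ZMod.natAbs_valMinAbs_le v)).trans (Nat.mul_div_le L 2)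
  have hx : |2 * π * (v.valMinAbs : ℝ) / L| = 2 * π * v.valMinAbs.natAbs / L := by
    rw [abs_div, abs_mul, abs_of_pos two_pi_pos, abs_of_pos hL, Nat.cast_natAbs, Int.cast_abs]
  have key := norm_exp_I_mul_sub_one_ge (x := 2 * π * (v.valMinAbs : ℝ) / L) (by
    rw [hx, div_le_iff₀ hL]; nlinarith [pi_pos])
  calc 4 * (v.valMinAbs.natAbs : ℝ) / L = 2 / π * |2 * π * (v.valMinAbs : ℝ) / L| := by
        rw [hx]; field_simp; ring
    _ ≤ _ := by rw [exp_I_mul_two_pi_val_div]; exact_mod_cast key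

lemma pow_three_le_norm_exp_I_mul_two_pi_val_div_sub_one (L : ℕ) [NeZero L] {β : ℝ}
    (hβ : 0 < β) (v : ZMod L) :
    (2 * v.valMinAbs.natAbs / (π * β)) ^ 3 ≤
      ‖Complex.exp (Complex.I * (2 * π * (v.val : ℝ) / L)) - 1‖ ^ 3
        * (L : ℝ) ^ 3 / (8 * π ^ 3 * β ^ 3) := by
  have hL : (0 : ℝ) < L := Nat.cast_pos.2 (Nat.pos_of_neZero L)
  have hpβ : 0 < π * β := by positivity
  have key := four_mul_natAbs_valMinAbs_div_le L v
  calc (2 * v.valMinAbs.natAbs / (π * β)) ^ 3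
        = (4 * (v.valMinAbs.natAbs : ℝ) / L * L / (2 * (π * β))) ^ 3 := by field_simp; ring
    _ ≤ (‖Complex.exp (Complex.I * (2 * π * (v.val : ℝ) / L)) - 1‖ * L / (2 * (π * β))) ^ 3 := by
        gcongr
    _ = _ := by field_simp; ring

lemma mem_Icc_neg_iff_natAbs_le {z : ℤ} {K : ℕ} : z ∈ Icc (-K : ℤ) K ↔ z.natAbs ≤ K := by
  rw [mem_Icc]; omega

lemma card_Icc_neg (K : ℕ) : #(Icc (-K : ℤ) K) = 2 * K + 1 := by
  rw [Int.card_Icc]; omega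

lemma sum_Icc_prod_Icc_max_natAbs (g : ℕ → ℝ) (K : ℕ) :
    ∑ z ∈ Icc (-K : ℤ) K ×ˢ Icc (-K : ℤ) K, g (max z.1.natAbs z.2.natAbs) =
      g 0 + ∑ M ∈ range K, 8 * (M + 1 : ℝ) * g (M + 1) := by
  induction K with
  | zero => simp
  | succ K ih =>
    set box : ℕ → Finset (ℤ × ℤ) := fun n => Icc (-n : ℤ) n ×ˢ Icc (-n : ℤ) n
    have hsub : box K ⊆ box (K + 1) := by
      intro z
      simp only [box, mem_product, mem_Icc_neg_iff_natAbs_le]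
      omega
    have hsphere : ∀ z ∈ box (K + 1) \ box K, max z.1.natAbs z.2.natAbs = K + 1 := by
      intro z
      simp only [box, mem_sdiff, mem_product, mem_Icc_neg_iff_natAbs_le]
      omega
    have hcard : (#(box (K + 1) \ box K) : ℝ) = 8 * (K + 1) := by
      rw [card_sdiff_of_subset hsub]
      simp only [box, card_product, card_Icc_neg]
      push_cast [Nat.cast_sub (Nat.mul_self_le_mul_self (by omega : 2 * K + 1 ≤ 2 * (K + 1) + 1))]
      ring
    rw [← sum_sdiff hsub, sum_congr rfl fun z hz => congrArg g (hsphere z hz), sum_const,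
      nsmul_eq_mul, hcard, ih, sum_range_succ]
    ring

lemma sum_max_natAbs_valMinAbs_le (L : ℕ) [NeZero L] (g : ℕ → ℝ) (hg : ∀ M, 0 ≤ g M) :
    ∑ x : ZMod L × ZMod L, g (max x.1.valMinAbs.natAbs x.2.valMinAbs.natAbs) ≤
      ∑ z ∈ Icc (-(L / 2 : ℕ) : ℤ) (L / 2 : ℕ) ×ˢ Icc (-(L / 2 : ℕ) : ℤ) (L / 2 : ℕ),
        g (max z.1.natAbs z.2.natAbs) := by
  have hinj : Function.Injective fun x : ZMod L × ZMod L => (x.1.valMinAbs, x.2.valMinAbs) :=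
    fun x y h => Prod.ext (ZMod.injective_valMinAbs (congrArg Prod.fst h))
      (ZMod.injective_valMinAbs (congrArg Prod.snd h))
  calc _ = ∑ z ∈ univ.image fun x : ZMod L × ZMod L => (x.1.valMinAbs, x.2.valMinAbs),
        g (max z.1.natAbs z.2.natAbs) := (sum_image hinj.injOn).symm
    _ ≤ _ := by
      refine sum_le_sum_of_subset_of_nonneg ?_ fun _ _ _ => hg _
      intro z hz
      obtain ⟨x, -, rfl⟩ := mem_image.1 hz
      simp only [mem_product, mem_Icc_neg_iff_natAbs_le]
      exact ⟨ZMod.natAbs_valMinAbs_le x.1, ZMod.natAbs_valMinAbs_le x.2⟩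

lemma sum_range_le_sub_of_le_hasDerivAt {G G' : ℝ → ℝ} {a : ℕ → ℝ}
    (hG : ∀ t, 0 ≤ t → HasDerivAt G (G' t) t)
    (ha : ∀ (M : ℕ), ∀ t ∈ Set.Icc (M : ℝ) (M + 1), a M ≤ G' t) (K : ℕ) :
    ∑ M ∈ range K, a M ≤ G K - G 0 := by
  induction K with
  | zero => simp
  | succ K ih =>
    have hK : ∀ t ∈ Set.Icc (K : ℝ) (K + 1), 0 ≤ t := fun t ht => K.cast_nonneg.trans ht.1
    obtain ⟨ξ, hξ, hslope⟩ := exists_hasDerivAt_eq_slope G G' (lt_add_one (K : ℝ))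
      (fun t ht => (hG t (hK t ht)).continuousAt.continuousWithinAt)
      (fun t ht => hG t (hK t (Set.Ioo_subset_Icc_self ht)))
    have hstep := ha K ξ (Set.Ioo_subset_Icc_self hξ)
    rw [hslope, add_sub_cancel_left, div_one] at hstep
    rw [sum_range_succ]
    push_cast
    linarith

lemma hasDerivAt_log_div_sq (u : ℝ) (hu : u + 1 ≠ 0) :
    HasDerivAt (fun u => log ((u ^ 2 - u + 1) / (u + 1) ^ 2)) (3 * (u - 1) / (u ^ 3 + 1)) u := by
  have hq : u ^ 2 - u + 1 ≠ 0 := by nlinarith [sq_nonneg (2 * u - 1)]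
  have hd : HasDerivAt (fun u => (u ^ 2 - u + 1) / (u + 1) ^ 2)
      (((2 * u - 1) * (u + 1) ^ 2 - (u ^ 2 - u + 1) * (2 * (u + 1))) / ((u + 1) ^ 2) ^ 2) u := by
    have hnum : HasDerivAt (fun u : ℝ => u ^ 2 - u + 1) (2 * u - 1) u := by
      simpa using ((hasDerivAt_pow 2 u).sub (hasDerivAt_id u)).add_const 1
    have hden : HasDerivAt (fun u : ℝ => (u + 1) ^ 2) (2 * (u + 1)) u := by
      simpa using ((hasDerivAt_id u).add_const 1).fun_pow 2
    exact hnum.div hden (pow_ne_zero 2 hu)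
  convert hd.log (div_ne_zero hq (pow_ne_zero 2 hu)) using 1
  rw [show u ^ 3 + 1 = (u + 1) * (u ^ 2 - u + 1) by ring]
  field_simp
  ring

lemma hasDerivAt_arctan_two_mul_sub_one_div_sqrt_three (u : ℝ) :
    HasDerivAt (fun u => arctan ((2 * u - 1) / √3)) (√3 / 2 / (u ^ 2 - u + 1)) u := by
  have h3 : √3 ^ 2 = 3 := sq_sqrt (by norm_num)
  have hd : HasDerivAt (fun u => (2 * u - 1) / √3) (2 / √3) u := by
    simpa using (((hasDerivAt_id u).const_mul 2).sub_const 1).div_const √3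
  convert hd.arctan using 1
  rw [div_pow, h3, show 1 + (2 * u - 1) ^ 2 / 3 = 4 * (u ^ 2 - u + 1) / 3 by ring]
  field_simp
  rw [h3]
  ring

noncomputable def weight (c t : ℝ) : ℝ := 1 / (1 + (2 * t / c) ^ 3)

lemma weight_antitoneOn {c : ℝ} (hc : 0 < c) : AntitoneOn (weight c) (Set.Ici 0) := by
  intro s hs t _ hst
  have : 0 ≤ 2 * s / c := by have := Set.mem_Ici.1 hs; positivity
  unfold weight
  gcongr

/-- Partial fractions: with `u = 2t/c`, `8(t + 1) w(t) = (4cu + 8)/(u³ + 1)`, and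
`1/(u³ + 1) = 1/(3(u + 1)) - (u - 2)/(3(u² - u + 1))`. -/
noncomputable def weightPrimitive (c t : ℝ) : ℝ :=
  c * (c - 2) / 3 * log (((2 * t / c) ^ 2 - 2 * t / c + 1) / (2 * t / c + 1) ^ 2)
    + 2 * c * (c + 2) / √3 * arctan ((2 * (2 * t / c) - 1) / √3)

lemma hasDerivAt_weightPrimitive {c t : ℝ} (hc : 0 < c) (ht : 0 ≤ t) :
    HasDerivAt (weightPrimitive c) (8 * (t + 1) * weight c t) t := by
  have hu : 0 ≤ 2 * t / c := by positivity
  have hscale : HasDerivAt (fun t => 2 * t / c) (2 / c) t := by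
    simpa using ((hasDerivAt_id t).const_mul 2).div_const c
  have hlog := (hasDerivAt_log_div_sq _ (by linarith)).comp t hscale
  have harctan := (hasDerivAt_arctan_two_mul_sub_one_div_sqrt_three _).comp t hscale
  refine ((hlog.const_mul (c * (c - 2) / 3)).add
    (harctan.const_mul (2 * c * (c + 2) / √3))).congr_deriv ?_
  unfold weight
  rw [add_comm 1, show (2 * t / c) ^ 3 + 1 =
    (2 * t / c + 1) * ((2 * t / c) ^ 2 - 2 * t / c + 1) by ring]
  field_simp
  ring

lemma weightPrimitive_zero (c : ℝ) :
    weightPrimitive c 0 = -(2 * c * (c + 2) / √3 * (π / 6)) := by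
  rw [weightPrimitive, show (2 * (2 * 0 / c) - 1) / √3 = -(√3)⁻¹ by ring, arctan_neg,
    arctan_inv_sqrt_three]
  norm_num

lemma weightPrimitive_sub_weightPrimitive_zero_le {c t : ℝ} (hc : 0 < c) (ht : 0 ≤ t) :
    weightPrimitive c t - weightPrimitive c 0 ≤ 1 + 4 * π * c * (c + 2) / (3 * √3) := by
  rw [weightPrimitive_zero, weightPrimitive]
  set u := 2 * t / c
  have hu : 0 ≤ u := by positivity
  set q := (u ^ 2 - u + 1) / (u + 1) ^ 2
  have hq_pos : 0 < q := by
    have : 0 < u ^ 2 - u + 1 := by nlinarith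
    positivity
  have hq_le : q ≤ 1 := by rw [div_le_one (by positivity)]; nlinarith
  have hq_ge : 1 / 4 ≤ q := by
    rw [le_div_iff₀ (by positivity)]; nlinarith [sq_nonneg (u - 1)]
  have hlog_le : log q ≤ 0 := log_nonpos hq_pos.le hq_le
  have hlog_ge : -3 ≤ log q := by
    have := one_sub_inv_le_log_of_pos hq_pos
    have : q⁻¹ ≤ 4 := by rw [inv_le_comm₀ hq_pos (by norm_num)]; linarith
    linarith
  have hlog_term : c * (c - 2) / 3 * log q ≤ 1 := by
    nlinarith [mul_nonneg (by nlinarith [sq_nonneg (c - 1)] : 0 ≤ c * (c - 2) + 1)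
      (neg_nonneg.2 hlog_le)]
  have harctan := mul_le_mul_of_nonneg_left (arctan_lt_pi_div_two ((2 * u - 1) / √3)).le
    (by positivity : 0 ≤ 2 * c * (c + 2) / √3)
  calc _ ≤ 1 + 2 * c * (c + 2) / √3 * (π / 2) + 2 * c * (c + 2) / √3 * (π / 6) := by linarith
    _ = _ := by field_simp; ring

lemma sum_range_mul_weight_le {c : ℝ} (hc : 0 < c) (K : ℕ) :
    ∑ M ∈ range K, 8 * (M + 1 : ℝ) * weight c (M + 1) ≤ 1 + 4 * π * c * (c + 2) / (3 * √3) := by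
  refine (sum_range_le_sub_of_le_hasDerivAt (fun t ht => hasDerivAt_weightPrimitive hc ht)
    (fun M t ht => ?_) K).trans (weightPrimitive_sub_weightPrimitive_zero_le hc K.cast_nonneg)
  have ht0 : 0 ≤ t := M.cast_nonneg.trans ht.1
  have hw : weight c (M + 1) ≤ weight c t :=
    weight_antitoneOn hc (Set.mem_Ici.2 ht0) (Set.mem_Ici.2 (by positivity)) ht.2
  have hw0 : 0 ≤ weight c (M + 1) := by unfold weight; positivity
  gcongr
  linarith [ht.1]

lemma one_div_le_weight_max_natAbs_valMinAbs (L : ℕ) [NeZero L] {β : ℝ} (hβ : 0 < β)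
    (x : ZMod L × ZMod L) :
    1 / (1 +
        ‖Complex.exp (Complex.I * (2 * π * (x.1.val : ℝ) / L)) - 1‖ ^ 3
          * (L : ℝ) ^ 3 / (8 * π ^ 3 * β ^ 3) +
        ‖Complex.exp (Complex.I * (2 * π * (x.2.val : ℝ) / L)) - 1‖ ^ 3
          * (L : ℝ) ^ 3 / (8 * π ^ 3 * β ^ 3)) ≤
      weight (π * β) (max x.1.valMinAbs.natAbs x.2.valMinAbs.natAbs : ℕ) := by
  have h₁ := pow_three_le_norm_exp_I_mul_two_pi_val_div_sub_one L hβ x.1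
  have h₂ := pow_three_le_norm_exp_I_mul_two_pi_val_div_sub_one L hβ x.2
  have h₁' : (0 : ℝ) ≤ (2 * x.1.valMinAbs.natAbs / (π * β)) ^ 3 := by positivity
  have h₂' : (0 : ℝ) ≤ (2 * x.2.valMinAbs.natAbs / (π * β)) ^ 3 := by positivity
  unfold weight
  rcases max_choice x.1.valMinAbs.natAbs x.2.valMinAbs.natAbs with h | h <;> rw [h] <;>
    exact one_div_le_one_div_of_le (by positivity) (by linarith)

/-- The discrete integral estimate: for every `L ∈ ℕ` (with `L ≠ 0`) and `β > 0`,
`∑_{x ∈ (ℤ/Lℤ)²} 1/(1 + ∑_{l=1}^2 |e^{2πi x_l/L} − 1|³ L³/(8π³β³))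
  ≤ 4 + 8π²β/(3√3) + 4π³β²/(3√3)`. -/
theorem discrete_integral_estimate (L : ℕ) [NeZero L] (β : ℝ) (hβ : 0 < β) :
    ∑ x : ZMod L × ZMod L,
      1 / (1 +
        ‖Complex.exp (Complex.I * (2 * Real.pi * (x.1.val : ℝ) / L)) - 1‖ ^ 3
          * (L : ℝ) ^ 3 / (8 * Real.pi ^ 3 * β ^ 3) +
        ‖Complex.exp (Complex.I * (2 * Real.pi * (x.2.val : ℝ) / L)) - 1‖ ^ 3
          * (L : ℝ) ^ 3 / (8 * Real.pi ^ 3 * β ^ 3))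
      ≤ 4 + 8 * Real.pi ^ 2 * β / (3 * Real.sqrt 3)
          + 4 * Real.pi ^ 3 * β ^ 2 / (3 * Real.sqrt 3) := by
  have hc : 0 < π * β := by positivity
  have hweight : ∀ M : ℕ, 0 ≤ weight (π * β) M := fun M => by unfold weight; positivity
  calc _ ≤ ∑ x : ZMod L × ZMod L,
          weight (π * β) (max x.1.valMinAbs.natAbs x.2.valMinAbs.natAbs : ℕ) :=
        sum_le_sum fun x _ => one_div_le_weight_max_natAbs_valMinAbs L hβ x
    _ ≤ ∑ z ∈ Icc (-(L / 2 : ℕ) : ℤ) (L / 2 : ℕ) ×ˢ Icc (-(L / 2 : ℕ) : ℤ) (L / 2 : ℕ),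
          weight (π * β) (max z.1.natAbs z.2.natAbs : ℕ) :=
        sum_max_natAbs_valMinAbs_le L _ hweight
    _ = weight (π * β) (0 : ℕ) +
          ∑ M ∈ range (L / 2), 8 * (M + 1 : ℝ) * weight (π * β) (M + 1 : ℕ) :=
        sum_Icc_prod_Icc_max_natAbs (fun M => weight (π * β) M) _
    _ ≤ 1 + (1 + 4 * π * (π * β) * (π * β + 2) / (3 * √3)) :=
        add_le_add (by simp [weight]) (by exact_mod_cast sum_range_mul_weight_le hc _)
    _ ≤ _ := by
        rw [show 4 * π * (π * β) * (π * β + 2) / (3 * √3) =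
          8 * π ^ 2 * β / (3 * √3) + 4 * π ^ 3 * β ^ 2 / (3 * √3) by ring]
        linarith
end

section
/- Let β > 0 and define F(E, s) := e^{sE}/(1 + e^{βE}) for E ∈ ℝ, s ∈ ℝ. Then for each m ∈ {1, 2, 3}, every E ∈ ℝ and every s ∈ [0, β], the m-th partial derivative in E satisfies |∂^m F/∂E^m (E, s)| ≤ ( β·e^{β|E|}/(1 + e^{β|E|}) )^m. -/
/-!
With `σ` the logistic function, `F = e^{sE} (1 - σ(βE))`, so `∂F/∂E = F · (s - βσ(βE))` and
`σ' = σ (1 - σ)`. Hence `∂ᵐF/∂Eᵐ = F · pₘ(σ(βE))` for polynomials `pₘ` obeying a first-order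
recursion. The substitution `E ↦ -E`, `s ↦ β - s` leaves `F` unchanged, so we may take `E ≥ 0`.
Then `F ≤ σ(βE) ∈ [1/2, 1]`, and the bound reduces to `|pₘ(x)| ≤ βᵐ xᵐ⁻¹` for `x ∈ [1/2, 1]`,
`s ∈ [0, β]`, which for `m ≤ 3` follows from explicit nonnegativity certificates.
-/

open Real Polynomial

lemma exp_div_one_add_exp_eq_sigmoid (x : ℝ) : exp x / (1 + exp x) = sigmoid x := by
  rw [sigmoid_def, exp_neg]
  field_simp
  ring

lemma inv_one_add_exp_eq_one_sub_sigmoid (x : ℝ) : (1 + exp x)⁻¹ = 1 - sigmoid x := by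
  rw [← sigmoid_neg, sigmoid_def, neg_neg]

lemma hasDerivAt_sigmoid_const_mul (β E : ℝ) :
    HasDerivAt (fun E ↦ sigmoid (β * E)) (β * (sigmoid (β * E) * (1 - sigmoid (β * E)))) E :=
  ((hasDerivAt_sigmoid (β * E)).comp E ((hasDerivAt_id E).const_mul β)).congr_deriv (by ring)

noncomputable def fermiFactor (β s E : ℝ) : ℝ :=
  exp (s * E) / (1 + exp (β * E))

namespace fermiFactor

variable {β s E : ℝ}

lemma pos (β s E : ℝ) : 0 < fermiFactor β s E := by
  unfold fermiFactor
  positivity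

lemma le_sigmoid (hs : s ≤ β) (hE : 0 ≤ E) : fermiFactor β s E ≤ sigmoid (β * E) := by
  rw [fermiFactor, ← exp_div_one_add_exp_eq_sigmoid]
  gcongr

lemma neg (β s E : ℝ) : fermiFactor β s (-E) = fermiFactor β (β - s) E := by
  simp only [fermiFactor, mul_neg, exp_neg, sub_mul, exp_sub]
  field_simp
  ring

end fermiFactor

noncomputable def fermiPoly (β s : ℝ) : ℕ → ℝ[X]
  | 0 => 1
  | m + 1 => (C s - C β * X) * fermiPoly β s m + C β * X * (1 - X) * derivative (fermiPoly β s m)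

lemma hasDerivAt_fermiFactor_mul_eval (β s : ℝ) (p : ℝ[X]) (E : ℝ) :
    HasDerivAt (fun E ↦ fermiFactor β s E * p.eval (sigmoid (β * E)))
      (fermiFactor β s E *
        ((C s - C β * X) * p + C β * X * (1 - X) * derivative p).eval (sigmoid (β * E))) E := by
  have hσ := hasDerivAt_sigmoid_const_mul β E
  have hexp : HasDerivAt (fun E ↦ exp (s * E)) (exp (s * E) * s) E := by
    simpa [mul_comm] using ((hasDerivAt_id E).const_mul s).exp
  simp only [fermiFactor, div_eq_mul_inv, inv_one_add_exp_eq_one_sub_sigmoid]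
  refine ((hexp.mul (hσ.const_sub 1)).mul ((p.hasDerivAt _).comp E hσ)).congr_deriv ?_
  simp only [Function.comp_apply, Pi.mul_apply, eval_add, eval_mul, eval_sub, eval_C, eval_X,
    eval_one]
  ring

theorem iteratedDeriv_fermiFactor (β s : ℝ) (m : ℕ) :
    iteratedDeriv m (fermiFactor β s) =
      fun E ↦ fermiFactor β s E * (fermiPoly β s m).eval (sigmoid (β * E)) := by
  induction m with
  | zero => simp [fermiPoly]
  | succ m ih =>
    rw [iteratedDeriv_succ, ih]
    exact funext fun E ↦ (hasDerivAt_fermiFactor_mul_eval β s _ E).deriv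

lemma abs_iteratedDeriv_fermiFactor_neg (β s : ℝ) (m : ℕ) (E : ℝ) :
    |iteratedDeriv m (fermiFactor β s) (-E)| = |iteratedDeriv m (fermiFactor β (β - s)) E| := by
  have h : (fun E ↦ fermiFactor β s (-E)) = fermiFactor β (β - s) := funext (fermiFactor.neg β s)
  rw [← h, iteratedDeriv_comp_neg, smul_eq_mul, abs_mul, abs_pow, abs_neg, abs_one, one_pow,
    one_mul]

lemma eval_fermiPoly_one (β s x : ℝ) : (fermiPoly β s 1).eval x = s - β * x := by
  simp [fermiPoly]

lemma eval_fermiPoly_two (β s x : ℝ) :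
    (fermiPoly β s 2).eval x = (s - β * x) ^ 2 - β ^ 2 * (x * (1 - x)) := by
  simp [fermiPoly]
  ring

lemma eval_fermiPoly_three (β s x : ℝ) :
    (fermiPoly β s 3).eval x = (s - β * x) ^ 3 - 3 * β ^ 2 * (x * (1 - x)) * (s - β * x)
      - β ^ 3 * (x * (1 - x)) * (1 - 2 * x) := by
  simp [fermiPoly]
  ring

section PolynomialBounds

variable {β s x : ℝ}

lemma abs_sub_mul_le (hs : s ∈ Set.Icc 0 β) (hx : x ∈ Set.Icc (1 / 2) 1) :
    |s - β * x| ≤ β := by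
  obtain ⟨hs0, hsβ⟩ := hs
  obtain ⟨hx0, hx1⟩ := hx
  rw [abs_le]
  constructor <;> nlinarith

lemma abs_sub_mul_sq_sub_le (hs : s ∈ Set.Icc 0 β) (hx : x ∈ Set.Icc (1 / 2) 1) :
    |(s - β * x) ^ 2 - β ^ 2 * (x * (1 - x))| ≤ β ^ 2 * x := by
  obtain ⟨hs0, hsβ⟩ := hs
  obtain ⟨hx0, hx1⟩ := hx
  rw [abs_le]
  constructor
  · nlinarith [sq_nonneg (s - β * x), sq_nonneg (β * x)]
  · nlinarith [mul_nonneg (by nlinarith : 0 ≤ 2 * β * x - s) hs0,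
      mul_nonneg (mul_nonneg (sq_nonneg β) (by linarith : 0 ≤ x)) (sub_nonneg.2 hx1)]

lemma abs_sub_mul_cube_sub_le (hs : s ∈ Set.Icc 0 β) (hx : x ∈ Set.Icc (1 / 2) 1) :
    |(s - β * x) ^ 3 - 3 * β ^ 2 * (x * (1 - x)) * (s - β * x) - β ^ 3 * (x * (1 - x)) * (1 - 2 * x)|
      ≤ β ^ 3 * x ^ 2 := by
  obtain ⟨hs0, hsβ⟩ := hs
  obtain ⟨hx0, hx1⟩ := hx
  have hβ : 0 ≤ β := by linarith
  have hβs : 0 ≤ β - s := by linarith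
  have hx : 0 ≤ x := by linarith
  have hc : 0 ≤ 2 * x - 1 := by linarith
  have hd : 0 ≤ 1 - x := by linarith
  rw [abs_le]
  constructor
  · -- Bernstein expansion in `s` and `β - s`; its coefficients are nonnegative on `[1/2, 1]`.
    have : 0 ≤ 5 * x - 3 * x ^ 2 - 1 := by nlinarith
    have : 0 ≤ 4 - 3 * x := by linarith
    have : 0 ≤ 9 * x - 6 * x ^ 2 - 2 := by nlinarith
    have : 0 ≤ 6 * x - 1 := by linarith
    have h : 0 ≤ (2 * x - 1) * (5 * x - 3 * x ^ 2 - 1) * s ^ 3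
        + 3 * (2 * x - 1) * (4 - 3 * x) * x * (β - s) * s ^ 2
        + 3 * x * (9 * x - 6 * x ^ 2 - 2) * (β - s) ^ 2 * s
        + x * (1 - x) * (6 * x - 1) * (β - s) ^ 3 := by
      positivity
    linear_combination h
  · -- At `x = 1/2` the difference has a double zero at `s = 0`, so no Bernstein certificate
    -- exists; after multiplying by `3x - 1` one completes the square in `s`.
    have h3x : 0 < 3 * x - 1 := by linarith
    have : 0 ≤ 18 * x ^ 2 - 15 * x + 4 := by nlinarith
    have h : 0 ≤ (3 * x - 1) * s ^ 2 * (β - s)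
        + β * ((3 * x - 1) * s - 3 * x * (2 * x - 1) * β / 2) ^ 2
        + β ^ 3 * x * (2 * x - 1) * (18 * x ^ 2 - 15 * x + 4) / 4 := by
      positivity
    rw [← sub_nonneg]
    refine nonneg_of_mul_nonneg_right ?_ h3x
    linear_combination h

lemma abs_eval_fermiPoly_le {m : ℕ} (hm : m = 1 ∨ m = 2 ∨ m = 3)
    (hs : s ∈ Set.Icc 0 β) (hx : x ∈ Set.Icc (1 / 2) 1) :
    |(fermiPoly β s m).eval x| ≤ β ^ m * x ^ (m - 1) := by
  rcases hm with rfl | rfl | rfl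
  · simpa [eval_fermiPoly_one] using abs_sub_mul_le hs hx
  · simpa [eval_fermiPoly_two] using abs_sub_mul_sq_sub_le hs hx
  · simpa [eval_fermiPoly_three] using abs_sub_mul_cube_sub_le hs hx

end PolynomialBounds

lemma abs_iteratedDeriv_fermiFactor_le_of_nonneg {β s E : ℝ} {m : ℕ}
    (hm : m = 1 ∨ m = 2 ∨ m = 3) (hs : s ∈ Set.Icc 0 β) (hE : 0 ≤ E) :
    |iteratedDeriv m (fermiFactor β s) E| ≤ (β * sigmoid (β * E)) ^ m := by
  have hσ : sigmoid (β * E) ∈ Set.Icc (1 / 2) 1 :=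
    ⟨by simpa [sigmoid_zero] using sigmoid_le (mul_nonneg (hs.1.trans hs.2) hE), sigmoid_le_one _⟩
  rw [iteratedDeriv_fermiFactor, abs_mul, abs_of_pos (fermiFactor.pos β s E)]
  calc fermiFactor β s E * |(fermiPoly β s m).eval (sigmoid (β * E))|
      ≤ sigmoid (β * E) * (β ^ m * sigmoid (β * E) ^ (m - 1)) :=
        mul_le_mul (fermiFactor.le_sigmoid hs.2 hE) (abs_eval_fermiPoly_le hm hs hσ)
          (abs_nonneg _) (sigmoid_nonneg _)
    _ = (β * sigmoid (β * E)) ^ m := by rcases hm with rfl | rfl | rfl <;> ring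

theorem deriv_bound_fermi_factor_general (β : ℝ) (m : ℕ)
    (hm : m = 1 ∨ m = 2 ∨ m = 3) (E s : ℝ) (hs : s ∈ Set.Icc (0 : ℝ) β) :
    |iteratedDeriv m (fun E : ℝ => Real.exp (s * E) / (1 + Real.exp (β * E))) E|
      ≤ (β * Real.exp (β * |E|) / (1 + Real.exp (β * |E|))) ^ m := by
  change |iteratedDeriv m (fermiFactor β s) E| ≤ _
  rw [mul_div_assoc, exp_div_one_add_exp_eq_sigmoid]
  rcases le_total 0 E with hE | hE
  · rw [abs_of_nonneg hE]
    exact abs_iteratedDeriv_fermiFactor_le_of_nonneg hm hs hE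
  · have hs' : β - s ∈ Set.Icc 0 β := ⟨sub_nonneg.2 hs.2, sub_le_self _ hs.1⟩
    rw [abs_of_nonpos hE, ← neg_neg E, abs_iteratedDeriv_fermiFactor_neg, neg_neg]
    exact abs_iteratedDeriv_fermiFactor_le_of_nonneg hm hs' (neg_nonneg.2 hE)

/-- For `F(E,s) = e^{sE}/(1+e^{βE})`, `m ∈ {1,2,3}`, `E ∈ ℝ` and `s ∈ [0,β]`:
`|∂^m F/∂E^m (E,s)| ≤ (β e^{β|E|}/(1+e^{β|E|}))^m`. -/
theorem deriv_bound_fermi_factor (β : ℝ) (hβ : 0 < β) (m : ℕ)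
    (hm : m = 1 ∨ m = 2 ∨ m = 3) (E s : ℝ) (hs : s ∈ Set.Icc (0 : ℝ) β) :
    |iteratedDeriv m (fun E : ℝ => Real.exp (s * E) / (1 + Real.exp (β * E))) E|
      ≤ (β * Real.exp (β * |E|) / (1 + Real.exp (β * |E|))) ^ m :=
  deriv_bound_fermi_factor_general β m hm E s hs
end

section
/- Let β > 0, h > 0 with βh ∈ 2ℕ, and E ∈ ℝ. Define g : [−β,β)_h → ℝ by g(t) := e^{tE} ( 1_{t≥0}/(1 + e^{βE}) − 1_{t<0}/(1 + e^{−βE}) ). Then for every t ∈ [−β,β)_h, g(t) = (1/β) · ∑_{ω ∈ M_h} e^{iωt} / ( h·(1 − e^{−iω/h + E/h}) ). -/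
/-!
With `β h = 2N` the frequencies of `M_h` are `ω_j = π (2j + 1 - 2N) / β`, so `ω_j β` is an odd
multiple of `π` and `x_j = e^{(E - iω_j)/h}` satisfies `x_j ^ 2N = -e^{βE}`. Summing the geometric
series therefore gives `1 / (1 - x_j) = (1 + e^{βE})⁻¹ ∑_{r < 2N} x_j ^ r`. After exchanging the
sums over `j` and `r`, the sum over `j` of `e^{iω_j (t - r/h)}` at the grid point `t = -β + m/h` is
a sum of `2N`-th roots of unity twisted by an odd phase: it vanishes unless `r ≡ m [MOD 2N]`, and
the surviving term carries the sign `(-1)^(m / 2N - 1)`, which is the antiperiodicity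
`g (t - β) = -g t` of `g`.
-/

open Finset Complex
open scoped Real

lemma inv_one_sub_eq_geom_sum_div {K : Type*} [Field K] {x c : K} {n : ℕ}
    (hx : x ^ n = -c) (hc : 1 + c ≠ 0) :
    (1 - x)⁻¹ = (∑ r ∈ range n, x ^ r) / (1 + c) := by
  have hgeom : (1 - x) * ∑ r ∈ range n, x ^ r = 1 + c := by
    rw [mul_neg_geom_sum, hx, sub_neg_eq_add]
  have hx1 : 1 - x ≠ 0 := left_ne_zero_of_mul (hgeom ▸ hc)
  rw [eq_div_iff hc, ← hgeom, inv_mul_cancel_left₀ hx1]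

lemma Complex.exp_int_mul_pi_mul_I (k : ℤ) : cexp (k * (π * I)) = (-1) ^ k := by
  rw [exp_int_mul, exp_pi_mul_I]

lemma Nat.eq_mod_of_intCast_dvd_sub {n m r : ℕ} (hr : r < n) (h : (n : ℤ) ∣ m - r) :
    r = m % n := by
  have hmod : r ≡ m [MOD n] := Int.natCast_modEq_iff.mp (Int.modEq_iff_dvd.mpr h)
  rwa [Nat.ModEq, Nat.mod_eq_of_lt hr] at hmod

lemma exp_mul_div_one_sub_exp_eq_sum {ω t h E : ℝ} {c : ℂ} {n : ℕ}
    (hx : cexp (-(I * ω) / h + E / h) ^ n = -c) (hc : 1 + c ≠ 0) :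
    cexp (I * (ω * t : ℝ)) / (h * (1 - cexp (-(I * ω) / h + E / h))) =
      (h * (1 + c))⁻¹ *
        ∑ r ∈ range n, (Real.exp (r * E / h) : ℂ) * cexp (I * (ω * (t - r / h) : ℝ)) := by
  have hterm (r : ℕ) : (Real.exp (r * E / h) : ℂ) * cexp (I * (ω * (t - r / h) : ℝ)) =
      cexp (I * (ω * t : ℝ)) * cexp (-(I * ω) / h + E / h) ^ r := by
    rw [ofReal_exp, ← exp_nat_mul, ← exp_add, ← exp_add]
    congr 1
    push_cast
    ring
  rw [sum_congr rfl fun r _ => hterm r, ← mul_sum, div_eq_mul_inv, mul_inv,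
    inv_one_sub_eq_geom_sum_div hx hc, mul_inv]
  ring

lemma sum_exp_odd_phase_of_not_dvd (N : ℕ) {k : ℤ} (hk : ¬ (2 * N : ℤ) ∣ k) :
    ∑ j : Fin (2 * N), cexp (π * I * ((2 * j + 1 - 2 * N) * k / (2 * N))) = 0 := by
  rcases Nat.eq_zero_or_pos N with rfl | hN
  · simp
  have hN' : (N : ℂ) ≠ 0 := by exact_mod_cast hN.ne'
  set ζ := cexp (2 * π * I * k / (2 * N))
  have hsplit (j : ℕ) : cexp (π * I * ((2 * j + 1 - 2 * N) * k / (2 * N))) =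
      cexp (π * I * ((1 - 2 * N) * k / (2 * N))) * ζ ^ j := by
    rw [← exp_nat_mul, ← exp_add]
    ring_nf
  have hζn : ζ ^ (2 * N) = 1 := by
    rw [← exp_nat_mul, ← exp_int_mul_two_pi_mul_I k]
    push_cast
    field_simp
  have hζ : ζ ≠ 1 := by
    intro hζ
    obtain ⟨l, hl⟩ := exp_eq_one_iff.mp hζ
    refine hk ⟨l, ?_⟩
    have hkl : (k : ℂ) = 2 * N * l := by
      field_simp at hl
      linear_combination hl
    exact_mod_cast hkl
  simp_rw [hsplit]
  rw [← mul_sum, Fin.sum_univ_eq_sum_range (fun j => ζ ^ j), geom_sum_eq hζ, hζn]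
  simp

lemma sum_exp_odd_phase_two_mul (N : ℕ) (l : ℤ) :
    ∑ j : Fin (2 * N), cexp (π * I * ((2 * j + 1 - 2 * N) * (2 * N * l : ℤ) / (2 * N))) =
      2 * N * (-1) ^ l := by
  rcases Nat.eq_zero_or_pos N with rfl | hN
  · simp
  have hN' : (N : ℂ) ≠ 0 := by exact_mod_cast hN.ne'
  have hterm (j : ℕ) :
      cexp (π * I * ((2 * j + 1 - 2 * N) * (2 * N * l : ℤ) / (2 * N))) = (-1) ^ l := by
    have hodd : Odd (2 * j + 1 - 2 * N : ℤ) := ⟨j - N, by ring⟩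
    rw [show π * I * ((2 * j + 1 - 2 * N) * (2 * N * l : ℤ) / (2 * N)) =
        ((2 * j + 1 - 2 * N) * l : ℤ) * (π * I) by push_cast; field_simp,
      exp_int_mul_pi_mul_I, zpow_mul, hodd.neg_one_zpow]
  simp only [hterm, sum_const, card_univ, Fintype.card_fin, nsmul_eq_mul]
  push_cast
  ring

lemma sum_mul_sum_exp_odd_phase (N m : ℕ) (a : ℕ → ℂ) :
    ∑ r ∈ range (2 * N), a r *
        ∑ j : Fin (2 * N), cexp (π * I * ((2 * j + 1 - 2 * N) * (m - r - 2 * N : ℤ) / (2 * N))) =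
      a (m % (2 * N)) * (2 * N * (-1) ^ ((m / (2 * N) : ℕ) - 1 : ℤ)) := by
  rcases Nat.eq_zero_or_pos N with rfl | hN
  · simp
  have hmod : m % (2 * N) ∈ range (2 * N) := mem_range.mpr (Nat.mod_lt m (by omega))
  rw [sum_eq_single_of_mem _ hmod]
  · have hdiv : (m - (m % (2 * N) : ℕ) - 2 * N : ℤ) = (2 * N * ((m / (2 * N) : ℕ) - 1) : ℤ) := by
      have := congrArg (Nat.cast : ℕ → ℤ) (Nat.div_add_mod m (2 * N))
      simp only [Nat.cast_add, Nat.cast_mul, Nat.cast_ofNat] at this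
      linear_combination -this
    rw [hdiv, sum_exp_odd_phase_two_mul]
  · intro r hr hne
    refine mul_eq_zero_of_right _ (sum_exp_odd_phase_of_not_dvd N fun hdvd => hne ?_)
    refine Nat.eq_mod_of_intCast_dvd_sub (mem_range.mp hr) ?_
    simpa using hdvd

noncomputable def fermionPropagator (β E t : ℝ) : ℝ :=
  Real.exp (t * E) *
    (if 0 ≤ t then 1 / (1 + Real.exp (β * E)) else -(1 / (1 + Real.exp (-(β * E)))))

lemma fermionPropagator_of_nonneg {β E t : ℝ} (ht : 0 ≤ t) :
    fermionPropagator β E t = Real.exp (t * E) / (1 + Real.exp (β * E)) := by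
  rw [fermionPropagator, if_pos ht, mul_one_div]

lemma fermionPropagator_sub {β E t : ℝ} (ht : 0 ≤ t) (htβ : t < β) :
    fermionPropagator β E (t - β) = -fermionPropagator β E t := by
  rw [fermionPropagator_of_nonneg ht, fermionPropagator, if_neg (by linarith), sub_mul,
    Real.exp_sub, Real.exp_neg]
  field_simp
  ring

lemma fermionPropagator_grid {β h E : ℝ} {N m : ℕ} (hh : 0 < h) (hM : β * h = 2 * N)
    (hm : m < 2 * (2 * N)) :
    fermionPropagator β E (-β + m / h) = (-1) ^ ((m / (2 * N) : ℕ) - 1 : ℤ) *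
      (Real.exp ((m % (2 * N) : ℕ) * E / h) / (1 + Real.exp (β * E))) := by
  have hβ : β = 2 * N / h := by rw [eq_div_iff hh.ne', hM]
  have hdiv := Nat.div_add_mod m (2 * N)
  have hq : m / (2 * N) < 2 := Nat.div_lt_of_lt_mul (by linarith)
  set r := m % (2 * N)
  have hr : (r : ℝ) / h < β := by
    rw [hβ, div_lt_div_iff_of_pos_right hh]
    exact_mod_cast Nat.mod_lt m (by omega)
  have hr0 : 0 ≤ (r : ℝ) / h := by positivity
  interval_cases m / (2 * N)
  · rw [show -β + m / h = r / h - β by rw [← hdiv]; push_cast; ring,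
      fermionPropagator_sub hr0 hr, fermionPropagator_of_nonneg hr0]
    simp [mul_div_right_comm]
  · rw [show -β + m / h = r / h by rw [← hdiv, hβ]; push_cast; field_simp; ring,
      fermionPropagator_of_nonneg hr0]
    simp [mul_div_right_comm]

/-- For `β h = 2N`, `j ↦ ω_j` enumerates `M_h` increasingly on `j < 2N`. -/
noncomputable def matsubaraFreq (β h : ℝ) (j : ℕ) : ℝ := -π * h + π / β + 2 * π * j / β

lemma matsubaraFreq_mul {β h : ℝ} {N : ℕ} (hβ : β ≠ 0) (hM : β * h = 2 * N) (j : ℕ) :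
    matsubaraFreq β h j * β = π * (2 * j + 1 - 2 * N) := by
  rw [matsubaraFreq, ← hM]
  field_simp
  ring

lemma exp_matsubaraFreq_pow {β h : ℝ} {N : ℕ} (hβ : β ≠ 0) (hh : h ≠ 0) (hM : β * h = 2 * N)
    (E : ℝ) (j : ℕ) :
    cexp (-(I * matsubaraFreq β h j) / h + E / h) ^ (2 * N) = -(Real.exp (β * E) : ℂ) := by
  have hodd : Odd (2 * N - 2 * j - 1 : ℤ) := ⟨N - j - 1, by ring⟩
  have hω : (matsubaraFreq β h j : ℂ) * β = π * (2 * j + 1 - 2 * N) := by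
    exact_mod_cast matsubaraFreq_mul hβ hM j
  have hM' : (β : ℂ) * h = 2 * N := by exact_mod_cast hM
  have hh' : (h : ℂ) ≠ 0 := ofReal_ne_zero.mpr hh
  have hexp : (2 * N : ℕ) * (-(I * matsubaraFreq β h j) / h + E / h) =
      (2 * N - 2 * j - 1 : ℤ) * (π * I) + (β * E : ℝ) := by
    push_cast
    rw [← hM']
    field_simp
    linear_combination -I * hω - I * π * hM'
  rw [← exp_nat_mul, hexp, exp_add, exp_int_mul_pi_mul_I, hodd.neg_one_zpow, neg_one_mul,
    ← ofReal_exp]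

lemma I_mul_matsubaraFreq_mul_grid {β h : ℝ} {N : ℕ} (hβ : β ≠ 0) (hh : h ≠ 0)
    (hM : β * h = 2 * N) (j m r : ℕ) :
    I * (matsubaraFreq β h j * (-β + m / h - r / h) : ℝ) =
      π * I * ((2 * j + 1 - 2 * N) * (m - r - 2 * N : ℤ) / (2 * N)) := by
  have hω : (matsubaraFreq β h j : ℂ) * β = π * (2 * j + 1 - 2 * N) := by
    exact_mod_cast matsubaraFreq_mul hβ hM j
  have hM' : (β : ℂ) * h = 2 * N := by exact_mod_cast hM
  have hh' : (h : ℂ) ≠ 0 := ofReal_ne_zero.mpr hh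
  have hβ' : (β : ℂ) ≠ 0 := ofReal_ne_zero.mpr hβ
  push_cast
  rw [← hM'] at hω ⊢
  field_simp
  linear_combination (-(β * h) + m - r : ℂ) * hω

/-- Matsubara expansion of `g(t) = e^{tE}(1_{t≥0}/(1+e^{βE}) − 1_{t<0}/(1+e^{−βE}))` on
the grid `[−β,β)_h` with `βh = 2N`: at `t = t_m = −β + m/h`,
`g(t) = (1/β) ∑_{ω ∈ M_h} e^{iωt}/(h(1 − e^{−iω/h + E/h}))`, with
`M_h` parametrized by `ω_j = −πh + π/β + 2πj/β`, `j = 0,…,2N−1`. -/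
theorem matsubara_expansion_of_g (β h : ℝ) (hβ : 0 < β) (hh : 0 < h)
    (N : ℕ) (hM : β * h = 2 * N) (E : ℝ) (m : Fin (2 * (2 * N))) :
    (Complex.ofReal (Real.exp ((-β + (m : ℝ) / h) * E) *
        (if 0 ≤ -β + (m : ℝ) / h then 1 / (1 + Real.exp (β * E))
          else -(1 / (1 + Real.exp (-(β * E)))))))
      = (1 / (β : ℂ)) *
        ∑ j : Fin (2 * N),
          Complex.exp (Complex.I *
            Complex.ofReal ((-Real.pi * h + Real.pi / β + 2 * Real.pi * (j : ℝ) / β)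
              * (-β + (m : ℝ) / h))) /
          ((h : ℂ) * (1 - Complex.exp
            (-(Complex.I *
                Complex.ofReal (-Real.pi * h + Real.pi / β + 2 * Real.pi * (j : ℝ) / β)) / h
              + (E : ℂ) / h))) := by
  have hc : (1 : ℂ) + Real.exp (β * E) ≠ 0 := by
    exact_mod_cast (by positivity : 1 + Real.exp (β * E) ≠ 0)
  change ((fermionPropagator β E (-β + m / h) : ℝ) : ℂ) = 1 / (β : ℂ) * ∑ j : Fin (2 * N),
    cexp (I * (matsubaraFreq β h j * (-β + m / h) : ℝ)) /
      (h * (1 - cexp (-(I * matsubaraFreq β h j) / h + E / h)))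
  simp_rw [fun j t => exp_mul_div_one_sub_exp_eq_sum (t := t)
    (exp_matsubaraFreq_pow hβ.ne' hh.ne' hM E j) hc, ← mul_sum]
  rw [sum_comm]
  simp_rw [I_mul_matsubaraFreq_mul_grid hβ.ne' hh.ne' hM, ← mul_sum]
  rw [sum_mul_sum_exp_odd_phase, fermionPropagator_grid hh hM m.isLt]
  have hM' : (β : ℂ) * h = 2 * N := by exact_mod_cast hM
  have hh' : (h : ℂ) ≠ 0 := ofReal_ne_zero.mpr hh.ne'
  have hβ' : (β : ℂ) ≠ 0 := ofReal_ne_zero.mpr hβ.ne'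
  push_cast
  rw [← hM']
  field_simp
end

section
/- Let h > 0 with βh ∈ 2ℕ, and let C_h be the square matrix ( C(xσs, yτu) ) indexed by (x,σ,s), (y,τ,u) ∈ Γ × {↑,↓} × [0,β)_h. Then det C_h = 1 / ∏_{k ∈ Γ*} (1 + e^{β E_k})², and in particular det C_h > 0 and is independent of h. -/
open scoped Real BigOperators
open MeasureTheory

/-!
In momentum space the covariance is block diagonal. Conjugating `C_h` by the discrete Fourier
transform on `Γ` (invertible with inverse `L^{-d}` times its conjugate, by orthogonality of
characters) leaves, for each momentum `k` and each spin, the `βh × βh` time block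
`e^{(m - n) E_k / h} (a_k - 1_{m < n})` with `a_k = 1 / (1 + e^{βE_k})`. Subtracting `e^{E_k / h}`
times each row from the next makes this block upper triangular with diagonal `(a_k, 1, …, 1)`,
so its determinant is `a_k`, whatever `h` is.
-/

open Matrix
open scoped Kronecker

theorem AddChar.map_sum_eq_prod {A M : Type*} [AddCommMonoid A] [CommMonoid M]
    (ψ : AddChar A M) {ι : Type*} (s : Finset ι) (f : ι → A) :
    ψ (∑ i ∈ s, f i) = ∏ i ∈ s, ψ (f i) :=
  map_prod ψ.toMonoidHom (fun i => Multiplicative.ofAdd (f i)) s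

section FourierBlock

variable {R : Type*} [CommRing R] [Fintype R] [DecidableEq R] {ψ : AddChar R ℂ}
  {κ ι : Type*} [Fintype κ] [DecidableEq κ] [Fintype ι] [DecidableEq ι]

theorem AddChar.sum_apply_dotProduct (hψ : ψ.IsPrimitive) (v : κ → R) :
    ∑ x : κ → R, ψ (v ⬝ᵥ x) = if v = 0 then (Fintype.card R : ℂ) ^ Fintype.card κ else 0 := by
  simp_rw [dotProduct, AddChar.map_sum_eq_prod]
  rw [← Fintype.prod_sum (fun j b => ψ (v j * b))]
  simp_rw [mul_comm (v _), AddChar.sum_mulShift _ hψ]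
  simp only [apply_ite (Nat.cast : ℕ → ℂ), Nat.cast_zero, Finset.prod_ite_zero, funext_iff]
  simp

theorem AddChar.of_dotProduct_mul_of_neg_dotProduct (hψ : ψ.IsPrimitive) :
    (of fun k x : κ → R => ψ (k ⬝ᵥ x)) * (of fun x k : κ → R => ψ (-(k ⬝ᵥ x)))
      = ((Fintype.card R : ℂ) ^ Fintype.card κ) • 1 := by
  ext k k'
  rw [Matrix.mul_apply]
  simp only [of_apply, ← AddChar.map_add_eq_mul, ← sub_eq_add_neg, ← sub_dotProduct,
    AddChar.sum_apply_dotProduct hψ, sub_eq_zero, Matrix.smul_apply, Matrix.one_apply,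
    smul_eq_mul, mul_ite, mul_one, mul_zero]

theorem det_of_sum_dotProduct (hψ : ψ.IsPrimitive) (G : (κ → R) → Matrix ι ι ℂ) :
    det (of fun p q : (κ → R) × ι =>
        ((Fintype.card R : ℂ) ^ Fintype.card κ)⁻¹ * ∑ k, ψ (k ⬝ᵥ (q.1 - p.1)) * G k p.2 q.2)
      = ∏ k, det (G k) := by
  set c : ℂ := (Fintype.card R : ℂ) ^ Fintype.card κ
  set F : Matrix (κ → R) (κ → R) ℂ := of fun k x => ψ (k ⬝ᵥ x)
  set F' : Matrix (κ → R) (κ → R) ℂ := of fun x k => ψ (-(k ⬝ᵥ x))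
  have hc : c ≠ 0 := by simp [c]
  have hinv : ((c⁻¹ • F) ⊗ₖ (1 : Matrix ι ι ℂ)) * (F' ⊗ₖ 1) = 1 := by
    rw [← mul_kronecker_mul, smul_mul, AddChar.of_dotProduct_mul_of_neg_dotProduct hψ, smul_smul,
      inv_mul_cancel₀ hc, one_smul, one_mul, one_kronecker_one]
  have hfactor : of (fun p q : (κ → R) × ι =>
        c⁻¹ * ∑ k, ψ (k ⬝ᵥ (q.1 - p.1)) * G k p.2 q.2)
      = (F' ⊗ₖ 1) * (blockDiagonal G).submatrix (Equiv.prodComm _ _) (Equiv.prodComm _ _)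
          * ((c⁻¹ • F) ⊗ₖ 1) := by
    ext ⟨x, w⟩ ⟨y, w'⟩
    simp only [sub_eq_add_neg, dotProduct_add, dotProduct_neg, AddChar.map_add_eq_mul,
      Finset.mul_sum, of_apply, Equiv.coe_prodComm, smul_of, mul_apply, kroneckerMap_apply,
      one_apply, mul_ite, mul_one, mul_zero, submatrix_apply, blockDiagonal_apply, Prod.snd_swap,
      Prod.fst_swap, ite_mul, zero_mul, Fintype.sum_prod_type, Finset.sum_ite_irrel,
      Finset.sum_ite_eq, Finset.mem_univ, if_true, Finset.sum_const_zero, Finset.sum_ite_eq',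
      Pi.smul_apply, smul_eq_mul, F', F]
    exact Finset.sum_congr rfl fun _ _ => by ring
  rw [hfactor, det_mul_comm, ← Matrix.mul_assoc, hinv, Matrix.one_mul, det_submatrix_equiv_self,
    det_blockDiagonal]

end FourierBlock

/-- The time block of `C_h` at a fixed momentum `k` and spin is `propagatorBlock (βh) (E_k / h) a`
with `a = 1 / (1 + e^{βE_k})`; its entries for `u > s` are `a - 1 = -1 / (1 + e^{-βE_k})`. -/
noncomputable def propagatorBlock (M : ℕ) (x a : ℝ) : Matrix (Fin M) (Fin M) ℝ :=
  of fun m n => Real.exp (((m : ℝ) - n) * x) * if n ≤ m then a else a - 1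

theorem det_propagatorBlock (M : ℕ) [NeZero M] (x a : ℝ) :
    det (propagatorBlock M x a) = a := by
  obtain ⟨M, rfl⟩ := Nat.exists_eq_succ_of_ne_zero (NeZero.ne M)
  set T := propagatorBlock (M + 1) x a
  -- subtracting `exp x` times row `i` from row `i + 1` leaves the unit vector `e_{i+1}`
  have hrows : det T = det (of fun m n => if m = 0 then T 0 n else if m = n then 1 else 0) := by
    refine det_eq_of_forall_row_eq_smul_add_pred (fun _ => Real.exp x) (fun n => by simp) ?_
    intro i n
    have hexp : Real.exp x * Real.exp (((i : ℝ) - n) * x)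
        = Real.exp (((i + 1 : ℕ) - n) * x) := by
      rw [← Real.exp_add]; push_cast; ring_nf
    simp only [T, propagatorBlock, of_apply, if_neg (Fin.succ_ne_zero i), Fin.val_succ,
      Fin.val_castSucc]
    rw [← mul_assoc, hexp]
    simp only [Fin.le_def, Fin.ext_iff, Fin.val_succ, Fin.val_castSucc]
    split_ifs with _ hsucc <;> try first | omega | ring1
    rw [hsucc, sub_self, zero_mul, Real.exp_zero]
    ring
  rw [hrows, det_of_isUpperTriangular, Fin.prod_univ_succ]
  · simp [T, propagatorBlock]
  · intro m n hnm
    have hnm : n < m := hnm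
    simp [hnm.ne', Fin.ne_zero_of_lt hnm]

theorem cexp_I_mul_phase (d L : ℕ) [NeZero L] (k x : Fin d → ZMod L) :
    Complex.exp (Complex.I * phase d L k x) = ZMod.stdAddChar (k ⬝ᵥ x) := by
  have hdot : k ⬝ᵥ x = ((∑ j, (k j).val * (x j).val : ℕ) : ZMod L) := by
    push_cast [ZMod.natCast_val, ZMod.cast_id]
    rfl
  rw [hdot, ZMod.stdAddChar_apply, ZMod.toCircle_natCast, phase]
  congr 1
  push_cast
  rw [Finset.mul_sum, Finset.mul_sum, Finset.sum_div]
  exact Finset.sum_congr rfl fun j _ => by ring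

theorem neg_one_div_one_add_exp_neg (y : ℝ) :
    -(1 / (1 + Real.exp (-y))) = 1 / (1 + Real.exp y) - 1 := by
  rw [Real.exp_neg]
  field_simp
  ring

theorem of_Cov_div_eq (d L : ℕ) [NeZero L] (t t' μ β : ℝ) {h : ℝ} (hh : 0 < h) (M : ℕ) :
    of (fun p q : (Fin d → ZMod L) × Bool × Fin M =>
        Cov d L t t' μ β p.1 p.2.1 ((p.2.2 : ℝ) / h) q.1 q.2.1 ((q.2.2 : ℝ) / h))
      = of fun p q => ((L : ℂ) ^ d)⁻¹ * ∑ k, ZMod.stdAddChar (k ⬝ᵥ (q.1 - p.1)) *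
          ((1 : Matrix Bool Bool ℂ) ⊗ₖ (propagatorBlock M (disp d L t t' μ k / h)
            (1 / (1 + Real.exp (β * disp d L t t' μ k)))).map Complex.ofReal) p.2 q.2 := by
  ext ⟨x, σ, m⟩ ⟨y, τ, n⟩
  have hle : (n : ℝ) / h - m / h ≤ 0 ↔ n ≤ m := by
    rw [sub_nonpos, div_le_div_iff_of_pos_right hh, Nat.cast_le, Fin.le_iff_val_le_val]
  rw [of_apply, of_apply, Cov, div_eq_inv_mul, mul_assoc, Finset.mul_sum]
  congr 1
  refine Finset.sum_congr rfl fun k _ => ?_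
  have hexp : -(((n : ℝ) / h - m / h) * disp d L t t' μ k)
      = ((m : ℝ) - n) * (disp d L t t' μ k / h) := by
    ring
  simp only [kronecker_apply, one_apply, map_apply, propagatorBlock, of_apply, hle, hexp,
    cexp_I_mul_phase, neg_one_div_one_add_exp_neg, Complex.ofReal_mul]
  split_ifs <;> ring

/-- The determinant of the covariance matrix `C_h` (indexed by `Γ × {↑,↓} × [0,β)_h`,
`βh = 2N`) equals `1/∏_{k∈Γ*}(1 + e^{βE_k})²`; in particular it is positive and
independent of `h`. -/
theorem covariance_determinant (d L : ℕ) [NeZero L] (t t' μ β : ℝ) (hβ : 0 < β)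
    (h : ℝ) (hh : 0 < h) (N : ℕ) (hM : β * h = 2 * N) :
    Matrix.det (Matrix.of
        fun p q : (Fin d → ZMod L) × Bool × Fin (2 * N) =>
          Cov d L t t' μ β p.1 p.2.1 ((p.2.2 : ℝ) / h) q.1 q.2.1 ((q.2.2 : ℝ) / h))
      = Complex.ofReal
          (1 / ∏ k : Fin d → ZMod L, (1 + Real.exp (β * disp d L t t' μ k)) ^ 2) ∧
    0 < 1 / ∏ k : Fin d → ZMod L, (1 + Real.exp (β * disp d L t t' μ k)) ^ 2 := by
  have : NeZero (2 * N) := ⟨fun h0 => (mul_pos hβ hh).ne' (by rw [hM]; exact_mod_cast h0)⟩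
  refine ⟨?_, by positivity⟩
  rw [of_Cov_div_eq d L t t' μ β hh,
    show (L : ℂ) ^ d = Fintype.card (ZMod L) ^ Fintype.card (Fin d) by simp,
    det_of_sum_dotProduct (ZMod.isPrimitive_stdAddChar L)]
  have hblock (x a : ℝ) : det ((propagatorBlock (2 * N) x a).map Complex.ofReal) = a :=
    (Complex.ofRealHom.map_det _).symm.trans (congrArg _ (det_propagatorBlock _ x a))
  simp only [det_kronecker, det_one, one_pow, one_mul, Fintype.card_bool, hblock]
  push_cast
  simp
end
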